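/- arXiv:1112.0771 — 8 statements merged into one kernel-verified Lean document; each statement's English description precedes it below -/
import Mathlib

section
/- In S(G), for all s,t in G the identity [t]·ε_s = ε_{ts}·[t] holds, where ε_r := [r][r*]. -/
universe u v

/-- An inverse semigroup: every element has a unique generalized inverse. -/
class InverseSemigroup (G : Type u) extends Semigroup G, Star G where
  mul_star_mul_self : ∀ s : G, s * star s * s = s
  star_mul_self_star : ∀ s : G, star s * s * star s = star s
  star_unique : ∀ s t : G, s * t * s = s → t * s * t = t → t = star s

variable (G : Type u) [InverseSemigroup G]

/-- The defining relations of the prefix expansion S(G). -/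
inductive ExpRel : FreeSemigroup G → FreeSemigroup G → Prop
  | rel1 (s t : G) : ExpRel (.of s * .of t * .of (star t)) (.of (s * t) * .of (star t))
  | rel2 (s t : G) : ExpRel (.of (star s) * .of s * .of t) (.of (star s) * .of (s * t))
  | rel3 (s : G) : ExpRel (.of s * .of (star s) * .of s) (.of s)

/-- The congruence generated by the defining relations. -/
def expCon : Con (FreeSemigroup G) := conGen (ExpRel G)

/-- The prefix expansion S(G) of the inverse semigroup G. -/
def SG : Type u := (expCon G).Quotient

instance : Semigroup (SG G) := Con.semigroup (expCon G)

variable {G}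

/-- The canonical generator [s] of S(G). -/
def gen (s : G) : SG G := ((FreeSemigroup.of s : FreeSemigroup G) : (expCon G).Quotient)

/-- ε_s = [s][s*] in S(G). -/
def eps (s : G) : SG G := gen s * gen (star s)

/-- ε_{s₁}⋯ε_{s_n}·x for a list [s₁,…,s_n]. -/
def epsList (l : List G) (x : SG G) : SG G := (l.map eps).foldr (· * ·) x

/-- ε_A · x for a finite set A ⊆ G. -/
noncomputable def epsSet (A : Finset G) (x : SG G) : SG G := epsList A.toList x

/-- The normal form condition on the pair (A, t). -/
def IsNormalForm (A : Finset G) (t : G) : Prop :=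
  t ∈ A ∧ t * star t ∈ A ∧ ∀ a ∈ A, a * star a = t * star t

/-- A partial homomorphism from an inverse semigroup to a semigroup. -/
structure IsPartialHom {H : Type v} [Semigroup H] (π : G → H) : Prop where
  rel1 : ∀ s t : G, π s * π t * π (star t) = π (s * t) * π (star t)
  rel2 : ∀ s t : G, π (star s) * π s * π t = π (star s) * π (s * t)
  rel3 : ∀ s : G, π s * π (star s) * π s = π s

/-- The natural partial order: x ≤ y iff x = y·e for some idempotent e. -/
def natLE {H : Type v} [Semigroup H] (x y : H) : Prop := ∃ e : H, e * e = e ∧ x = y * e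

/-- A filter in an inverse semigroup. -/
def IsFilter (ξ : Set G) : Prop :=
  ξ.Nonempty ∧ ∀ e s : G, e * e = e → (e * s ∈ ξ ↔ e ∈ ξ ∧ s ∈ ξ)

section Aux

open InverseSemigroup

variable {G : Type u} [InverseSemigroup G]

private lemma aux_sss (s : G) : s * star s * s = s := mul_star_mul_self s
private lemma aux_s's (s : G) : star s * s * star s = star s := star_mul_self_star s

private lemma aux_star_star (s : G) : star (star s) = s :=
  (star_unique (star s) s (aux_s's s) (aux_sss s)).symm

private lemma aux_star_of_idem {e : G} (he : e * e = e) : star e = e :=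
  (star_unique e e (by rw [he, he]) (by rw [he, he])).symm

private lemma aux_idem_mid {e : G} (he : e * e = e) (x : G) : e * (e * x) = e * x := by
  rw [← mul_assoc, he]

private lemma aux_idem_mul {e f : G} (he : e * e = e) (hf : f * f = f) :
    (e * f) * (e * f) = e * f := by
  set g := star (e * f) with hg
  have h1 : (e * f) * g * (e * f) = e * f := mul_star_mul_self (e * f)
  have h2 : g * (e * f) * g = g := star_mul_self_star (e * f)
  have key : f * g * e = g := by
    refine star_unique (e * f) (f * g * e) ?_ ?_
    · simp only [mul_assoc]
      rw [aux_idem_mid hf, aux_idem_mid he]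
      simpa only [mul_assoc] using h1
    · simp only [mul_assoc]
      rw [aux_idem_mid he, aux_idem_mid hf]
      have h2' := congrArg (· * e) h2
      simp only [mul_assoc] at h2'
      exact congrArg (f * ·) h2'
  have hgidem : g * g = g := by
    conv_lhs => rw [← key]
    calc (f * g * e) * (f * g * e) = f * (g * (e * f) * g) * e := by simp only [mul_assoc]
      _ = f * g * e := by rw [h2]
      _ = g := key
  have hef : e * f = star g := star_unique g (e * f) h2 h1
  rw [aux_star_of_idem hgidem] at hef
  rw [hef]
  exact hgidem

private lemma aux_idem_comm {e f : G} (he : e * e = e) (hf : f * f = f) :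
    e * f = f * e := by
  have hef := aux_idem_mul he hf
  have hfe := aux_idem_mul hf he
  have h1 : (e * f) * (f * e) * (e * f) = e * f := by
    simp only [mul_assoc] at hef ⊢
    rw [aux_idem_mid hf, aux_idem_mid he]
    exact hef
  have h2 : (f * e) * (e * f) * (f * e) = f * e := by
    simp only [mul_assoc] at hfe ⊢
    rw [aux_idem_mid he, aux_idem_mid hf]
    exact hfe
  have h3 : f * e = star (e * f) := star_unique (e * f) (f * e) h1 h2
  exact (h3.trans (aux_star_of_idem hef)).symm

private lemma aux_idem_ss' (s : G) : (s * star s) * (s * star s) = s * star s := by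
  rw [← mul_assoc, aux_sss]

private lemma aux_idem_s's (s : G) : (star s * s) * (star s * s) = star s * s := by
  rw [← mul_assoc, aux_s's]

private lemma aux1 (s t : G) : (s * t) * (star t * star s) * (s * t) = s * t := by
  have hc : (t * star t) * (star s * s) = (star s * s) * (t * star t) :=
    aux_idem_comm (aux_idem_ss' t) (aux_idem_s's s)
  calc (s * t) * (star t * star s) * (s * t)
      = s * ((t * star t) * (star s * s)) * t := by simp only [mul_assoc]
    _ = s * ((star s * s) * (t * star t)) * t := by rw [hc]
    _ = (s * star s * s) * (t * star t * t) := by simp only [mul_assoc]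
    _ = s * t := by rw [aux_sss, aux_sss]

private lemma aux_star_mul (s t : G) : star (s * t) = star t * star s := by
  have h1 := aux1 s t
  have h2 : (star t * star s) * (s * t) * (star t * star s) = star t * star s := by
    have := aux1 (star t) (star s)
    rwa [aux_star_star, aux_star_star] at this
  exact (star_unique (s * t) (star t * star s) h1 h2).symm

private lemma aux_keyid (s t : G) :
    (star s * star t) * (t * s * star s) = (star s * star t) * t := by
  have hc : (star t * t) * (s * star s) = (s * star s) * (star t * t) :=
    aux_idem_comm (aux_idem_s's t) (aux_idem_ss' s)
  calc (star s * star t) * (t * s * star s)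
      = star s * ((star t * t) * (s * star s)) := by simp only [mul_assoc]
    _ = star s * ((s * star s) * (star t * t)) := by rw [hc]
    _ = (star s * s * star s) * (star t * t) := by simp only [mul_assoc]
    _ = (star s * star t) * t := by rw [aux_s's]; simp only [mul_assoc]

/-- The quotient map as a function. -/
private def mk (a : FreeSemigroup G) : SG G := (a : (expCon G).Quotient)

private lemma mk_mul (a b : FreeSemigroup G) : mk (a * b) = mk a * mk b :=
  Con.coe_mul a b

private lemma mk_rel {a b : FreeSemigroup G} (h : ExpRel G a b) : mk a = mk b :=
  (Con.eq (expCon G)).mpr (ConGen.Rel.of _ _ h)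

private lemma gen_eq (s : G) : gen s = mk (.of s) := rfl

private lemma rel1' (s t : G) :
    gen s * gen t * gen (star t) = gen (s * t) * gen (star t) := by
  rw [gen_eq, gen_eq, gen_eq, gen_eq, ← mk_mul, ← mk_mul, ← mk_mul]
  exact mk_rel (ExpRel.rel1 s t)

private lemma rel2' (s t : G) :
    gen (star s) * gen s * gen t = gen (star s) * gen (s * t) := by
  rw [gen_eq, gen_eq, gen_eq, gen_eq, ← mk_mul, ← mk_mul, ← mk_mul]
  exact mk_rel (ExpRel.rel2 s t)

private lemma rel3' (s : G) : gen s * gen (star s) * gen s = gen s := by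
  rw [gen_eq, gen_eq, ← mk_mul, ← mk_mul]
  exact mk_rel (ExpRel.rel3 s)

/-- rel2 flipped: `[u][u*][b] = [u][u*·b]`. -/
private lemma rel2'' (u b : G) :
    gen u * gen (star u) * gen b = gen u * gen (star u * b) := by
  have := rel2' (star u) b
  rwa [aux_star_star] at this

end Aux

theorem gen_mul_eps (G : Type u) [InverseSemigroup G] (s t : G) :
    gen t * eps s = eps (t * s) * gen t := by
  have hC : gen (star (t * s)) * gen (t * s) * gen (star s)
      = gen (star (t * s)) * gen ((t * s) * star s) := rel2' (t * s) (star s)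
  have hkey : star (t * s) * ((t * s) * star s) = star (t * s) * t := by
    rw [aux_star_mul t s]
    exact aux_keyid s t
  show gen t * (gen s * gen (star s)) = (gen (t * s) * gen (star (t * s))) * gen t
  calc gen t * (gen s * gen (star s))
      = gen t * gen s * gen (star s) := (mul_assoc _ _ _).symm
    _ = gen (t * s) * gen (star s) := rel1' t s
    _ = (gen (t * s) * gen (star (t * s)) * gen (t * s)) * gen (star s) := by
        rw [rel3' (t * s)]
    _ = gen (t * s) * (gen (star (t * s)) * gen (t * s) * gen (star s)) := by
        simp only [mul_assoc]
    _ = gen (t * s) * (gen (star (t * s)) * gen ((t * s) * star s)) := by rw [hC]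
    _ = gen (t * s) * gen (star (t * s)) * gen ((t * s) * star s) :=
        (mul_assoc _ _ _).symm
    _ = gen (t * s) * gen (star (t * s) * ((t * s) * star s)) :=
        rel2'' (t * s) ((t * s) * star s)
    _ = gen (t * s) * gen (star (t * s) * t) := by rw [hkey]
    _ = gen (t * s) * gen (star (t * s)) * gen t := (rel2'' (t * s) t).symm
    _ = (gen (t * s) * gen (star (t * s))) * gen t := rfl
end

section
/- In S(G), for every idempotent e of G one has [e] = ε_e = [e][e*]; in particular [e] is idempotent in S(G). -/
universe u v

variable (G : Type u) [InverseSemigroup G]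

variable {G}

theorem gen_idempotent_eq_eps (G : Type u) [InverseSemigroup G] (e : G) (he : e * e = e) :
    gen e = eps e ∧ gen e * gen e = gen (G := G) e := by
  have hse : star e = e := (InverseSemigroup.star_unique e e (by rw [he, he]) (by rw [he, he])).symm
  let q : FreeSemigroup G → SG G := fun x => ((x : (expCon G).Quotient) : SG G)
  have key : ∀ x y : FreeSemigroup G, ExpRel G x y → q x = q y := by
    intro x y h
    exact Quotient.sound (ConGen.Rel.of _ _ h)
  have coe_mul : ∀ x y : FreeSemigroup G, q (x * y) = q x * q y :=
    fun _ _ => rfl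
  have h3 : gen e * gen e * gen e = gen e := by
    have := key _ _ (ExpRel.rel3 e)
    rw [hse] at this
    rw [coe_mul, coe_mul] at this
    exact this
  have h1 : gen e * gen e * gen e = gen e * gen e := by
    have := key _ _ (ExpRel.rel1 e e)
    rw [hse, he] at this
    rw [coe_mul, coe_mul] at this
    exact this
  have hid : gen e * gen e = gen (G := G) e := by rw [← h1, h3]
  refine ⟨?_, hid⟩
  rw [eps, hse, hid]
end

section
/- In S(G), for every idempotent e of G and every s in G one has [e][s]=[es] and [s][e]=[se]. -/
universe u v

variable (G : Type u) [InverseSemigroup G]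

variable {G}

lemma star_idem {G : Type u} [InverseSemigroup G] {e : G} (he : e * e = e) :
    star e = e := by
  have := InverseSemigroup.star_unique e e (by rw [he, he]) (by rw [he, he])
  exact this.symm

lemma genRel {G : Type u} [InverseSemigroup G] {a b : FreeSemigroup G}
    (h : ExpRel G a b) : (a : (expCon G).Quotient) = (b : (expCon G).Quotient) :=
  (Con.eq _).mpr (ConGen.Rel.of _ _ h)

lemma grel1 {G : Type u} [InverseSemigroup G] (s t : G) :
    gen s * gen t * gen (star t) = gen (s * t) * gen (star t) :=
  genRel (ExpRel.rel1 s t)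

lemma grel2 {G : Type u} [InverseSemigroup G] (s t : G) :
    gen (star s) * gen s * gen t = gen (star s) * gen (s * t) :=
  genRel (ExpRel.rel2 s t)

lemma grel3 {G : Type u} [InverseSemigroup G] (s : G) :
    gen s * gen (star s) * gen s = gen s :=
  genRel (ExpRel.rel3 s)

lemma gen_idem {G : Type u} [InverseSemigroup G] {e : G} (he : e * e = e) :
    gen (G := G) e * gen e = gen e := by
  have h1 := grel1 e e
  have h3 := grel3 e
  rw [star_idem he, he] at h1
  rw [star_idem he] at h3
  rw [← h1, h3]

theorem gen_idempotent_mul (G : Type u) [InverseSemigroup G] (e : G) (he : e * e = e) (s : G) :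
    gen e * gen s = gen (e * s) ∧ gen s * gen e = gen (G := G) (s * e) := by
  constructor
  · have h2 := grel2 e s
    rw [star_idem he] at h2
    have step1 : gen e * gen s = gen (G := G) e * gen (e * s) := by
      conv_lhs => rw [← gen_idem he]
      exact h2
    have h1 := grel1 e (e * s)
    have h3 := grel3 (e * s)
    have hees : e * (e * s) = e * s := by rw [← mul_assoc, he]
    calc gen e * gen s = gen (G := G) e * gen (e * s) := step1
      _ = gen e * (gen (e * s) * gen (star (e * s)) * gen (e * s)) := by rw [h3]
      _ = gen e * gen (e * s) * gen (star (e * s)) * gen (e * s) := by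
            simp only [mul_assoc]
      _ = gen (e * (e * s)) * gen (star (e * s)) * gen (e * s) := by rw [h1]
      _ = gen (e * s) := by rw [hees, h3]
  · have h1 := grel1 s e
    rw [star_idem he] at h1
    have step1 : gen s * gen e = gen (G := G) (s * e) * gen e := by
      conv_lhs => rw [← gen_idem he]
      rw [← mul_assoc, h1]
    have h2 := grel2 (s * e) e
    have h3 := grel3 (s * e)
    have hsee : s * e * e = s * e := by rw [mul_assoc, he]
    calc gen s * gen e = gen (G := G) (s * e) * gen e := step1
      _ = gen (s * e) * gen (star (s * e)) * gen (s * e) * gen e := by rw [h3]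
      _ = gen (s * e) * (gen (star (s * e)) * gen (s * e) * gen e) := by
            simp only [mul_assoc]
      _ = gen (s * e) * (gen (star (s * e)) * gen (s * e * e)) := by rw [h2]
      _ = gen (s * e) * (gen (star (s * e)) * gen (s * e)) := by rw [hsee]
      _ = gen (s * e) := by rw [← mul_assoc, h3]
end

section
/- Every element x of S(G) can be written as a product x = ε_{s₁}⋯ε_{s_n}[t] for some s₁,…,s_n,t ∈ G, where moreover one may arrange that s₁s₁* = ⋯ = s_n s_n* = t t* and that both t and tt* belong to {s₁,…,s_n} (normal form). -/
universe u v

variable (G : Type u) [InverseSemigroup G]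

variable {G}

section NFAux
open InverseSemigroup

variable {G : Type u} [InverseSemigroup G]

namespace NFAux

lemma isg1 (s : G) : s * star s * s = s := mul_star_mul_self s
lemma isg2 (s : G) : star s * s * star s = star s := star_mul_self_star s

lemma sstar (s : G) : star (star s) = s :=
  (star_unique (star s) s (isg2 s) (isg1 s)).symm

lemma staridem {e : G} (he : e * e = e) : star e = e :=
  (star_unique e e (by rw [he, he]) (by rw [he, he])).symm

lemma idem_ss (s : G) : (s * star s) * (s * star s) = s * star s := by
  rw [mul_assoc, ← mul_assoc (star s), isg2]

lemma idem_sts (s : G) : (star s * s) * (star s * s) = star s * s := by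
  rw [mul_assoc, ← mul_assoc s (star s), isg1]

lemma ctxR {H : Type v} [Semigroup H] {x y : H} (h : x = y) (z : H) : x * z = y * z := by
  rw [h]

lemma isg2R (u : G) (z : G) : star u * (u * (star u * z)) = star u * z := by
  rw [← mul_assoc, ← mul_assoc, isg2]

lemma ef_idem {e f : G} (he : e * e = e) (hf : f * f = f) : (e * f) * (e * f) = e * f := by
  have H := isg1 (e * f)
  have H2 := isg2 (e * f)
  set g := star (e * f) with hg
  have Hc : ∀ z : G, g * (e * (f * (g * z))) = g * z := by
    intro z
    simpa only [mul_assoc] using ctxR H2 z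
  have h1 : (e * f) * (f * g * e) * (e * f) = e * f := by
    simp only [mul_assoc]
    rw [← mul_assoc f f, hf, ← mul_assoc e e, he]
    simpa only [mul_assoc] using H
  have h2 : (f * g * e) * (e * f) * (f * g * e) = f * g * e := by
    simp only [mul_assoc]
    rw [← mul_assoc e e, he, ← mul_assoc f f, hf, Hc e]
  have hge : f * g * e = g := star_unique (e * f) _ h1 h2
  have hgg : g * g = g := by
    conv_lhs => rw [← hge]
    simp only [mul_assoc]
    rw [Hc e]
    simpa only [mul_assoc] using hge
  have hef : e * f = g := by
    calc e * f = star (star (e * f)) := (sstar _).symm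
      _ = star g := rfl
      _ = g := staridem hgg
  rw [hef]; exact hgg

lemma idem_comm {e f : G} (he : e * e = e) (hf : f * f = f) : e * f = f * e := by
  have hef := ef_idem he hf
  have hfe := ef_idem hf he
  have h1 : (e * f) * (f * e) * (e * f) = e * f := by
    simp only [mul_assoc]
    rw [← mul_assoc f f, hf, ← mul_assoc e e, he]
    simpa only [mul_assoc] using hef
  have h2 : (f * e) * (e * f) * (f * e) = f * e := by
    simp only [mul_assoc]
    rw [← mul_assoc e e, he, ← mul_assoc f f, hf]
    simpa only [mul_assoc] using hfe
  have h3 : f * e = star (e * f) := star_unique (e * f) (f * e) h1 h2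
  rw [h3, staridem hef]

lemma smul (s t : G) : star (s * t) = star t * star s := by
  have c1 : (s * t) * (star t * star s) * (s * t) = s * t := by
    simp only [mul_assoc]
    have key : t * (star t * (star s * (s * t))) = ((t * star t) * (star s * s)) * t := by
      simp only [mul_assoc]
    rw [key, idem_comm (idem_ss t) (idem_sts s)]
    simp only [mul_assoc]
    rw [← mul_assoc t (star t) t, isg1 t, ← mul_assoc s (star s), ← mul_assoc, isg1 s]
  have c2 : (star t * star s) * (s * t) * (star t * star s) = star t * star s := by
    simp only [mul_assoc]
    have key : star s * (s * (t * (star t * star s))) = ((star s * s) * (t * star t)) * star s := by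
      simp only [mul_assoc]
    rw [key, idem_comm (idem_sts s) (idem_ss t)]
    simp only [mul_assoc]
    rw [← mul_assoc (star s) s (star s), isg2 s, ← mul_assoc (star t) t, ← mul_assoc, isg2 t]
  exact (star_unique (s * t) _ c1 c2).symm

lemma fc_class {f c : G} (hf : star f = f) (hff : f * f = f) (hcf : c * star c * f = f) :
    (f * c) * star (f * c) = f := by
  rw [smul, hf, ← mul_assoc, mul_assoc f c (star c), mul_assoc f (c * star c) f, hcf, hff]

def mkSG (q : FreeSemigroup G) : SG G := (q : (expCon G).Quotient)

lemma rel_eq {a b : FreeSemigroup G} (h : ExpRel G a b) : mkSG a = mkSG b :=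
  (Con.eq _).mpr (ConGen.Rel.of _ _ h)

lemma r1 (s t : G) : gen s * gen t * gen (star t) = gen (s * t) * gen (star t) :=
  rel_eq (ExpRel.rel1 s t)

lemma r2 (s t : G) : gen (star s) * gen s * gen t = gen (star s) * gen (s * t) :=
  rel_eq (ExpRel.rel2 s t)

lemma r3 (s : G) : gen s * gen (star s) * gen s = gen s :=
  rel_eq (ExpRel.rel3 s)

lemma D1 (p q : G) : gen p * gen q = gen (p * q * star q) * gen q := by
  have h := r1 (p * q) (star q)
  rw [sstar] at h
  calc gen p * gen q = gen p * (gen q * gen (star q) * gen q) := by rw [r3]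
    _ = gen p * gen q * gen (star q) * gen q := by simp only [mul_assoc]
    _ = gen (p * q) * gen (star q) * gen q := by rw [r1 p q]
    _ = gen (p * q * star q) * gen q := h

lemma D6 (t : G) : gen (t * star t) * gen t = gen t := by
  have h := r1 t (star t)
  rw [sstar] at h
  rw [← h, r3]

lemma D2 (t : G) : eps (t * star t) * gen t = gen t := by
  have hst : star (t * star t) = t * star t := staridem (idem_ss t)
  have h2 := r2 (t * star t) t
  rw [hst] at h2
  show gen (t * star t) * gen (star (t * star t)) * gen t = gen t
  rw [hst, h2, isg1 t, D6 t]

lemma epsg (t : G) : eps t * gen t = gen t := r3 t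

lemma B (s t : G) : gen s * gen t = eps (s * t * star t) * gen (s * t) := by
  have hpt : (s * t * star t) * t = s * t := by
    rw [mul_assoc s t (star t), mul_assoc s (t * star t) t, isg1 t]
  calc gen s * gen t = gen (s * t * star t) * gen t := D1 s t
    _ = (gen (s * t * star t) * gen (star (s * t * star t)) * gen (s * t * star t)) * gen t := by
        rw [r3]
    _ = gen (s * t * star t) * (gen (star (s * t * star t)) * gen (s * t * star t) * gen t) := by
        simp only [mul_assoc]
    _ = gen (s * t * star t) * (gen (star (s * t * star t)) * gen ((s * t * star t) * t)) := by
        rw [r2]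
    _ = eps (s * t * star t) * gen (s * t) := by
        rw [hpt]
        exact (mul_assoc (gen (s * t * star t)) (gen (star (s * t * star t))) (gen (s * t))).symm

lemma D1C (p q : G) (z : SG G) :
    gen p * (gen q * z) = gen (p * q * star q) * (gen q * z) := by
  simpa only [mul_assoc] using ctxR (D1 p q) z

lemma FIX2 {f : G} (hf : star f = f) (hff : f * f = f) {a b : G}
    (haf : a * star a * f = f) (hb : b * star b = f) :
    eps a * eps b = eps (f * a) * eps b := by
  have hsaf : star (star a * f) = f * a := by rw [smul, sstar, hf]
  have hstep : star a * b * star b = star a * f := by rw [mul_assoc, hb]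
  have hw : a * (star a * f) * star (star a * f) = f * a := by
    rw [hsaf]
    simp only [mul_assoc]
    rw [← mul_assoc f f, hff, ← mul_assoc, ← mul_assoc, haf]
  have hfa : star (f * a) = star a * f := by rw [smul, hf]
  show gen a * gen (star a) * (gen b * gen (star b))
      = gen (f * a) * gen (star (f * a)) * (gen b * gen (star b))
  rw [hfa]
  simp only [mul_assoc]
  rw [D1C (star a) b (gen (star b)), hstep, D1C a (star a * f) (gen b * gen (star b)), hw]

lemma FIX2C {f : G} (hf : star f = f) (hff : f * f = f) {a b : G}
    (haf : a * star a * f = f) (hb : b * star b = f) (z : SG G) :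
    eps a * (eps b * z) = eps (f * a) * (eps b * z) := by
  simpa only [mul_assoc] using ctxR (FIX2 hf hff haf hb) z

lemma epsList_cons (a : G) (l : List G) (x : SG G) :
    epsList (a :: l) x = eps a * epsList l x := rfl

lemma epsList_mul (l : List G) (x z : SG G) : epsList l x * z = epsList l (x * z) := by
  induction l with
  | nil => rfl
  | cons a l ih => rw [epsList_cons, epsList_cons, mul_assoc, ih]

lemma epsList_append (l₁ l₂ : List G) (x : SG G) :
    epsList (l₁ ++ l₂) x = epsList l₁ (epsList l₂ x) := by
  induction l₁ with
  | nil => rfl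
  | cons a l ih => rw [List.cons_append, epsList_cons, epsList_cons, ih]

lemma fixup (f : G) (hf : star f = f) (hff : f * f = f) :
    ∀ (l : List G), (∀ a ∈ l, a * star a * f = f) → ∀ (b : G), b * star b = f → ∀ (z : SG G),
      epsList l (eps b * z) = epsList (l.map (fun a => f * a)) (eps b * z) := by
  intro l
  induction l with
  | nil => intro _ b _ z; rfl
  | cons a l ih =>
    intro h b hb z
    have ha := h a (List.mem_cons_self : a ∈ a :: l)
    have hrest : ∀ c ∈ l, c * star c * f = f := fun c hc => h c (List.mem_cons_of_mem a hc)
    rw [List.map_cons, epsList_cons, epsList_cons, ih hrest b hb z]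
    cases l with
    | nil => exact FIX2C hf hff ha hb z
    | cons c l' =>
      have hc' : (f * c) * star (f * c) = f :=
        fc_class hf hff (hrest c (List.mem_cons_self : c ∈ c :: l'))
      exact FIX2C hf hff ha hc' _

lemma main (q : FreeSemigroup G) :
    ∃ (l : List G) (t : G), mkSG q = epsList l (gen t) ∧
      ∀ a ∈ l, a * star a * (t * star t) = t * star t := by
  obtain ⟨h, tl⟩ := q
  induction tl using List.reverseRecOn with
  | nil => exact ⟨[], h, rfl, by simp⟩
  | append_singleton l u ih =>
    obtain ⟨l₀, t, hx, hcond⟩ := ih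
    have hdecomp : mkSG (⟨h, l ++ [u]⟩ : FreeSemigroup G) = mkSG ⟨h, l⟩ * gen u := rfl
    refine ⟨l₀ ++ [t * u * star u], t * u, ?_, ?_⟩
    · rw [hdecomp, hx, epsList_mul, B t u, epsList_append]
      rfl
    · intro a ha
      have key : t * star t * ((t * u) * star (t * u)) = (t * u) * star (t * u) := by
        rw [smul]
        simp only [← mul_assoc]
        rw [isg1 t]
      rcases List.mem_append.mp ha with hmem | hmem
      · have h1 := hcond a hmem
        calc a * star a * ((t * u) * star (t * u))
            = a * star a * (t * star t * ((t * u) * star (t * u))) := by rw [key]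
          _ = a * star a * (t * star t) * ((t * u) * star (t * u)) := by simp only [mul_assoc]
          _ = t * star t * ((t * u) * star (t * u)) := by rw [h1]
          _ = (t * u) * star (t * u) := key
      · have haeq : a = t * u * star u := by simpa using hmem
        subst haeq
        have hp : (t * u * star u) * star (t * u * star u) = (t * u) * star (t * u) := by
          simp only [smul, sstar, mul_assoc]
          rw [isg2R u]
        rw [hp]
        exact idem_ss (t * u)

end NFAux
end NFAux
theorem exists_normal_form (G : Type u) [InverseSemigroup G] (x : SG G) :
    ∃ (l : List G) (t : G), x = epsList l (gen t) ∧
      (∀ a ∈ l, a * star a = t * star t) ∧ t ∈ l ∧ t * star t ∈ l := by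
  obtain ⟨q, rfl⟩ : ∃ q, NFAux.mkSG q = x := Quotient.exists_rep x
  obtain ⟨l₀, t, hx, hcond⟩ := NFAux.main q
  have hf : star (t * star t) = t * star t := NFAux.staridem (NFAux.idem_ss t)
  have hff : (t * star t) * (t * star t) = t * star t := NFAux.idem_ss t
  have hb : (t * star t) * star (t * star t) = t * star t := by rw [hf]; exact hff
  refine ⟨(l₀.map (fun a => (t * star t) * a)) ++ [t * star t, t], t, ?_, ?_, ?_, ?_⟩
  · have e1 : epsList l₀ (gen t)
        = epsList (l₀.map (fun a => (t * star t) * a)) (eps (t * star t) * gen t) := by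
      calc epsList l₀ (gen t) = epsList l₀ (eps (t * star t) * gen t) := by rw [NFAux.D2 t]
        _ = epsList (l₀.map (fun a => (t * star t) * a)) (eps (t * star t) * gen t) :=
            NFAux.fixup (t * star t) hf hff l₀ hcond (t * star t) hb (gen t)
    have e2 : epsList ((l₀.map (fun a => (t * star t) * a)) ++ [t * star t, t]) (gen t)
        = epsList (l₀.map (fun a => (t * star t) * a)) (eps (t * star t) * gen t) := by
      rw [NFAux.epsList_append]
      show epsList (l₀.map (fun a => (t * star t) * a)) (eps (t * star t) * (eps t * gen t)) = _
      rw [NFAux.epsg t]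
    exact hx.trans (e1.trans e2.symm)
  · intro a ha
    rcases List.mem_append.mp ha with hmem | hmem
    · obtain ⟨c, hc, rfl⟩ := List.mem_map.mp hmem
      exact NFAux.fc_class hf hff (hcond c hc)
    · rcases List.mem_cons.mp hmem with h1 | h2
      · subst h1; rw [hf]; exact hff
      · have ht : a = t := by simpa using h2
        subst ht; rfl
  · simp
  · simp
end

section
/- S(G) is an inverse semigroup: every element x of S(G) has a unique element x̄ with x x̄ x = x and x̄ x x̄ = x̄. -/
universe u v

variable (G : Type u) [InverseSemigroup G]

variable {G}

/-! ### Auxiliary development -/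

namespace SGAux

section Gcalc
variable {G : Type u} [InverseSemigroup G]

lemma mss (s : G) : s * star s * s = s := InverseSemigroup.mul_star_mul_self s
lemma sms (s : G) : star s * s * star s = star s := InverseSemigroup.star_mul_self_star s

lemma star_star (s : G) : star (star s) = s :=
  (InverseSemigroup.star_unique (star s) s (sms s) (mss s)).symm

lemma star_idem {e : G} (he : e * e = e) : star e = e :=
  (InverseSemigroup.star_unique e e (by rw [he, he]) (by rw [he, he])).symm

lemma idem_sms (s : G) : (star s * s) * (star s * s) = star s * s := by
  rw [← mul_assoc, sms]

lemma idem_mss (s : G) : (s * star s) * (s * star s) = s * star s := by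
  rw [← mul_assoc, mss]

lemma mss' (s : G) : s * (star s * s) = s := by rw [← mul_assoc, mss]
lemma sms' (s : G) : star s * (s * star s) = star s := by rw [← mul_assoc, sms]

lemma idem_mul_idem {e f : G} (he : e * e = e) (hf : f * f = f) :
    (e * f) * (e * f) = e * f := by
  set x := star (e * f) with hx
  have h1 : (e * f) * x * (e * f) = e * f := mss _
  have h2 : x * (e * f) * x = x := sms _
  have hg1 : (e * f) * (f * x * e) * (e * f) = e * f := by
    calc (e * f) * (f * x * e) * (e * f)
        = e * (f * f) * x * ((e * e) * f) := by simp only [mul_assoc]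
      _ = (e * f) * x * (e * f) := by rw [he, hf]
      _ = e * f := h1
  have hg2 : (f * x * e) * (e * f) * (f * x * e) = f * x * e := by
    calc (f * x * e) * (e * f) * (f * x * e)
        = f * (x * ((e * e) * ((f * f) * (x * e)))) := by simp only [mul_assoc]
      _ = f * (x * (e * (f * (x * e)))) := by rw [he, hf]
      _ = f * ((x * (e * f) * x) * e) := by simp only [mul_assoc]
      _ = f * x * e := by rw [h2]; simp only [mul_assoc]
  have hgx : f * x * e = x := InverseSemigroup.star_unique _ _ hg1 hg2
  have hgg : (f * x * e) * (f * x * e) = f * x * e := by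
    calc (f * x * e) * (f * x * e)
        = f * ((x * (e * f) * x) * e) := by simp only [mul_assoc]
      _ = f * x * e := by rw [h2]; simp only [mul_assoc]
  have hxx : x * x = x := by rw [← hgx]; exact hgg
  have hef : e * f = star x := InverseSemigroup.star_unique x (e * f) h2 h1
  rw [hef, star_idem hxx]
  exact hxx

lemma idem_comm {e f : G} (he : e * e = e) (hf : f * f = f) : e * f = f * e := by
  have hef := idem_mul_idem he hf
  have hfe := idem_mul_idem hf he
  have h1 : (e * f) * (f * e) * (e * f) = e * f := by
    calc (e * f) * (f * e) * (e * f)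
        = e * ((f * f) * ((e * e) * f)) := by simp only [mul_assoc]
      _ = e * (f * (e * f)) := by rw [he, hf]
      _ = (e * f) * (e * f) := by simp only [mul_assoc]
      _ = e * f := hef
  have h2 : (f * e) * (e * f) * (f * e) = f * e := by
    calc (f * e) * (e * f) * (f * e)
        = f * ((e * e) * ((f * f) * e)) := by simp only [mul_assoc]
      _ = f * (e * (f * e)) := by rw [he, hf]
      _ = (f * e) * (f * e) := by simp only [mul_assoc]
      _ = f * e := hfe
  have := InverseSemigroup.star_unique (e * f) (f * e) h1 h2
  rw [star_idem hef] at this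
  exact this.symm

lemma star_mul (s t : G) : star (s * t) = star t * star s := by
  have h1 : (s * t) * (star t * star s) * (s * t) = s * t := by
    calc (s * t) * (star t * star s) * (s * t)
        = s * ((t * star t) * (star s * s)) * t := by simp only [mul_assoc]
      _ = s * ((star s * s) * (t * star t)) * t := by rw [idem_comm (idem_mss t) (idem_sms s)]
      _ = (s * star s * s) * (t * star t * t) := by simp only [mul_assoc]
      _ = s * t := by rw [mss, mss]
  have h2 : (star t * star s) * (s * t) * (star t * star s) = star t * star s := by
    calc (star t * star s) * (s * t) * (star t * star s)
        = star t * ((star s * s) * (t * star t)) * star s := by simp only [mul_assoc]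
      _ = star t * ((t * star t) * (star s * s)) * star s := by
          rw [idem_comm (idem_sms s) (idem_mss t)]
      _ = (star t * t * star t) * (star s * s * star s) := by simp only [mul_assoc]
      _ = star t * star s := by rw [sms, sms]
  exact (InverseSemigroup.star_unique _ _ h1 h2).symm

end Gcalc

end SGAux

namespace SGAux

section SGcalc
variable {G : Type u} [InverseSemigroup G]

lemma gen_mul_def (s t : G) :
    gen s * gen t = ((FreeSemigroup.of s * FreeSemigroup.of t : FreeSemigroup G) :
      (expCon G).Quotient) := rfl

lemma rel_eq {w₁ w₂ : FreeSemigroup G} (h : ExpRel G w₁ w₂) :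
    ((w₁ : (expCon G).Quotient) : SG G) = (w₂ : (expCon G).Quotient) :=
  (Con.eq _).2 (ConGen.Rel.of _ _ h)

lemma gen_rel1 (s t : G) : gen s * gen t * gen (star t) = gen (s * t) * gen (star t) := by
  refine rel_eq (ExpRel.rel1 s t)

lemma gen_rel2 (s t : G) : gen (star s) * gen s * gen t = gen (star s) * gen (s * t) := by
  refine rel_eq (ExpRel.rel2 s t)

lemma gen_rel3 (s : G) : gen s * gen (star s) * gen s = gen s := by
  refine rel_eq (ExpRel.rel3 s)

lemma gen_rel2' (s t : G) : gen s * gen (star s) * gen t = gen s * gen (star s * t) := by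
  have := gen_rel2 (star s) t
  rwa [star_star] at this

lemma gen_rel1' (s t : G) : gen s * gen (star t) * gen t = gen (s * star t) * gen t := by
  have := gen_rel1 s (star t)
  rwa [star_star] at this

lemma gen_idem {e : G} (he : e * e = e) : gen e * gen e = gen (e : G) := by
  have h3 : gen e * gen e * gen e = gen e := by
    have := gen_rel3 e; rwa [star_idem he] at this
  have h1 : gen e * gen e * gen e = gen e * gen e := by
    have := gen_rel1 e e; rwa [star_idem he, he] at this
  exact h1.symm.trans h3

lemma gen_E2 (s : G) : gen (s * star s) * gen s = gen s := by
  have h := gen_rel1 s (star s)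
  rw [star_star] at h
  exact h.symm.trans (gen_rel3 s)

lemma gen_E2' (s : G) : gen s * gen (star s * s) = gen s :=
  (gen_rel2' s s).symm.trans (gen_rel3 s)

lemma gen_L6 {e : G} (he : e * e = e) (t : G) : gen e * gen t = gen e * gen (e * t) := by
  have h2 := gen_rel2' e t
  rw [star_idem he] at h2
  calc gen e * gen t = gen e * gen e * gen t := by rw [gen_idem he]
    _ = gen e * gen (e * t) := h2

lemma gen_L6' {e : G} (he : e * e = e) (t : G) : gen t * gen e = gen (t * e) * gen e := by
  have h1 := gen_rel1 t e
  rw [star_idem he] at h1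
  calc gen t * gen e = gen t * (gen e * gen e) := by rw [gen_idem he]
    _ = gen t * gen e * gen e := by rw [mul_assoc]
    _ = gen (t * e) * gen e := h1

lemma gen_G1 (x t : G) : gen x * gen t = gen x * gen ((star x * x) * t) := by
  calc gen x * gen t = gen x * gen (star x * x) * gen t := by rw [gen_E2']
    _ = gen x * (gen (star x * x) * gen t) := mul_assoc _ _ _
    _ = gen x * (gen (star x * x) * gen ((star x * x) * t)) := by rw [gen_L6 (idem_sms x) t]
    _ = gen x * gen (star x * x) * gen ((star x * x) * t) := (mul_assoc _ _ _).symm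
    _ = gen x * gen ((star x * x) * t) := by rw [gen_E2']

lemma gen_D2 (s t : G) : gen s * gen (star s) * gen (s * t) = gen s * gen t := by
  symm
  calc gen s * gen t = (gen s * gen (star s) * gen s) * gen t := by rw [gen_rel3]
    _ = gen s * (gen (star s) * gen s * gen t) := by simp only [mul_assoc]
    _ = gen s * (gen (star s) * gen (s * t)) := by rw [gen_rel2]
    _ = gen s * gen (star s) * gen (s * t) := (mul_assoc _ _ _).symm

lemma gen_mul_eps (g h : G) : gen g * gen h = eps g * gen (g * h) := by
  show gen g * gen h = gen g * gen (star g) * gen (g * h)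
  exact (gen_D2 g h).symm

lemma eps_idem (a : G) : eps a * eps a = eps a := by
  show (gen a * gen (star a)) * (gen a * gen (star a)) = gen a * gen (star a)
  calc (gen a * gen (star a)) * (gen a * gen (star a))
      = (gen a * gen (star a) * gen a) * gen (star a) := by simp only [mul_assoc]
    _ = gen a * gen (star a) := by rw [gen_rel3]

end SGcalc

end SGAux

namespace SGAux

section SGmore
variable {G : Type u} [InverseSemigroup G]

lemma gen_K (g b : G) : gen g * eps b = eps (g * b) * gen g := by
  have hG : (star (g * b) * (g * b)) * star b = star (g * b) * g := by
    rw [star_mul]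
    calc ((star b * star g) * (g * b)) * star b
        = star b * ((star g * g) * (b * star b)) := by simp only [mul_assoc]
      _ = star b * ((b * star b) * (star g * g)) := by rw [idem_comm (idem_sms g) (idem_mss b)]
      _ = (star b * b * star b) * (star g * g) := by simp only [mul_assoc]
      _ = star b * (star g * g) := by rw [sms]
      _ = (star b * star g) * g := (mul_assoc _ _ _).symm
  calc gen g * eps b = gen g * gen b * gen (star b) := (mul_assoc _ _ _).symm
    _ = gen (g * b) * gen (star b) := by rw [gen_rel1]
    _ = gen (g * b) * gen ((star (g * b) * (g * b)) * star b) := gen_G1 _ _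
    _ = gen (g * b) * gen (star (g * b) * g) := by rw [hG]
    _ = gen (g * b) * gen (star (g * b)) * gen g := (gen_rel2' _ _).symm
    _ = eps (g * b) * gen g := rfl

lemma gen_L5 {e : G} (he : e * e = e) (b : G) : gen e * eps b = gen e * eps (e * b) := by
  have hG : (star (e * b) * (e * b)) * star b = star (e * b) := by
    rw [star_mul, star_idem he]
    calc ((star b * e) * (e * b)) * star b
        = star b * ((e * e) * (b * star b)) := by simp only [mul_assoc]
      _ = star b * (e * (b * star b)) := by rw [he]
      _ = star b * ((b * star b) * e) := by rw [idem_comm he (idem_mss b)]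
      _ = (star b * b * star b) * e := by simp only [mul_assoc]
      _ = star b * e := by rw [sms]
  calc gen e * eps b = gen e * gen b * gen (star b) := (mul_assoc _ _ _).symm
    _ = gen e * gen (e * b) * gen (star b) := by
        rw [show gen e * gen b = gen e * gen (e * b) from gen_L6 he b]
    _ = gen e * (gen (e * b) * gen ((star (e * b) * (e * b)) * star b)) := by
        rw [mul_assoc, show gen (e*b) * gen (star b)
          = gen (e*b) * gen ((star (e * b) * (e * b)) * star b) from gen_G1 _ _]
    _ = gen e * (gen (e * b) * gen (star (e * b))) := by rw [hG]
    _ = gen e * eps (e * b) := rfl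

lemma eps_C2 (a b : G) : eps a * eps b = eps a * eps ((a * star a) * b) := by
  have h : gen (star a) * gen (a * star a) = gen (star a) := by
    have := gen_E2' (star a); rwa [star_star] at this
  calc eps a * eps b = gen a * (gen (star a) * eps b) := mul_assoc _ _ _
    _ = gen a * ((gen (star a) * gen (a * star a)) * eps b) := by rw [h]
    _ = gen a * (gen (star a) * (gen (a * star a) * eps b)) := by
        rw [mul_assoc (gen (star a))]
    _ = gen a * (gen (star a) * (gen (a * star a) * eps ((a * star a) * b))) := by
        rw [gen_L5 (idem_mss a) b]
    _ = gen a * ((gen (star a) * gen (a * star a)) * eps ((a * star a) * b)) := by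
        rw [mul_assoc (gen (star a))]
    _ = gen a * (gen (star a) * eps ((a * star a) * b)) := by rw [h]
    _ = eps a * eps ((a * star a) * b) := (mul_assoc _ _ _).symm

/-- The reversal anti-homomorphism. -/
def rmap : FreeSemigroup G →ₙ* (SG G)ᵐᵒᵖ :=
  FreeSemigroup.lift (fun s => MulOpposite.op (gen (star s)))

lemma rmap_of (s : G) : rmap (FreeSemigroup.of s) = MulOpposite.op (gen (star s)) :=
  FreeSemigroup.lift_of _ _

lemma rmap_resp : ∀ w₁ w₂ : FreeSemigroup G, expCon G w₁ w₂ → rmap w₁ = rmap w₂ := by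
  intro w₁ w₂ h
  induction h with
  | of x y h =>
    cases h with
    | rel1 s t =>
      rw [map_mul, map_mul, map_mul, rmap_of, rmap_of, rmap_of, rmap_of, star_star, star_mul]
      simp only [← MulOpposite.op_mul]
      refine congrArg _ ?_
      exact gen_rel2' t (star s)
    | rel2 s t =>
      rw [map_mul, map_mul, map_mul, rmap_of, rmap_of, rmap_of, rmap_of, star_star, star_mul]
      simp only [← MulOpposite.op_mul]
      refine congrArg _ ?_
      exact gen_rel1' (star t) s
    | rel3 s =>
      rw [map_mul, map_mul, rmap_of, rmap_of, star_star]
      simp only [← MulOpposite.op_mul]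
      refine congrArg _ ?_
      have := gen_rel3 (star s); rwa [star_star] at this
  | refl => rfl
  | symm _ ih => exact ih.symm
  | trans _ _ ih1 ih2 => exact ih1.trans ih2
  | mul _ _ ih1 ih2 => rw [map_mul, map_mul, ih1, ih2]

/-- The reversal map on S(G). -/
def rb (x : SG G) : SG G :=
  MulOpposite.unop (Con.liftOn x (fun w => rmap w) rmap_resp)

lemma rb_mul (x y : SG G) : rb (x * y) = rb y * rb x := by
  induction x, y using Con.induction_on₂ with
  | _ a b =>
    show MulOpposite.unop (rmap (a * b)) = _
    rw [map_mul]
    rfl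

lemma rb_gen (s : G) : rb (gen s) = gen (star s) := by
  show MulOpposite.unop (rmap (FreeSemigroup.of s)) = _
  rw [rmap_of]
  rfl

lemma rb_eps (a : G) : rb (eps a) = eps a := by
  show rb (gen a * gen (star a)) = eps a
  rw [rb_mul, rb_gen, rb_gen, star_star]
  rfl

lemma eps_C2' (a b : G) : eps b * eps a = eps ((a * star a) * b) * eps a := by
  have h := congrArg rb (eps_C2 a b)
  rwa [rb_mul, rb_mul, rb_eps, rb_eps, rb_eps] at h

lemma eps_comm_of_eq {a b : G} (hab : a * star a = b * star b) :
    eps a * eps b = eps b * eps a := by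
  have f1 : a * (star a * b) = b := by rw [← mul_assoc, hab, mss]
  have f2 : star (star a * b) = star b * a := by rw [star_mul, star_star]
  have f3 : star (star a * b) * star a = star b := by
    rw [f2]
    calc (star b * a) * star a = star b * (a * star a) := mul_assoc _ _ _
      _ = star b * (b * star b) := by rw [hab]
      _ = star b := sms' b
  show gen a * gen (star a) * (gen b * gen (star b))
      = gen b * gen (star b) * (gen a * gen (star a))
  calc gen a * gen (star a) * (gen b * gen (star b))
      = gen a * gen (star a) * gen b * gen (star b) := (mul_assoc _ _ _).symm
    _ = gen a * gen (star a * b) * gen (star b) := by rw [gen_rel2']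
    _ = gen a * gen (star a * b) * gen (star (star a * b) * star a) := by rw [f3]
    _ = gen a * (gen (star a * b) * gen (star (star a * b)) * gen (star a)) := by
        rw [gen_rel2']; exact mul_assoc _ _ _
    _ = gen a * gen (star a * b) * gen (star (star a * b)) * gen (star a) := by
        simp only [mul_assoc]
    _ = gen (a * (star a * b)) * gen (star (star a * b)) * gen (star a) := by rw [gen_rel1]
    _ = gen b * gen (star b * a) * gen (star a) := by rw [f1, f2]
    _ = gen b * gen (star b) * gen a * gen (star a) := by rw [← gen_rel2']
    _ = gen b * gen (star b) * (gen a * gen (star a)) := mul_assoc _ _ _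

lemma dom_of_mul (x y : G) : (x * y) * star (x * y) = x * ((y * star y) * star x) := by
  rw [star_mul]; simp only [mul_assoc]

lemma eps_half (a b : G) :
    eps a * eps b = eps (((a * star a) * (b * star b)) * a)
      * eps (((a * star a) * (b * star b)) * b) := by
  have he : ((a * star a) * (b * star b)) * ((a * star a) * (b * star b))
      = (a * star a) * (b * star b) := idem_mul_idem (idem_mss a) (idem_mss b)
  have k1 : ((a * star a) * b) * star ((a * star a) * b) = (a * star a) * (b * star b) := by
    rw [dom_of_mul, star_idem (idem_mss a)]
    calc (a * star a) * ((b * star b) * (a * star a))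
        = (a * star a) * ((a * star a) * (b * star b)) := by
          rw [idem_comm (idem_mss b) (idem_mss a)]
      _ = ((a * star a) * (a * star a)) * (b * star b) := (mul_assoc _ _ _).symm
      _ = (a * star a) * (b * star b) := by rw [idem_mss]
  have k2 : ((a * star a) * (b * star b)) * b = (a * star a) * b := by
    rw [mul_assoc, mss]
  calc eps a * eps b = eps a * eps ((a * star a) * b) := eps_C2 a b
    _ = eps ((((a * star a) * b) * star ((a * star a) * b)) * a) * eps ((a * star a) * b) :=
        eps_C2' ((a * star a) * b) a
    _ = _ := by rw [k1, k2]

lemma eps_comm (a b : G) : eps a * eps b = eps b * eps a := by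
  have he : ((a * star a) * (b * star b)) * ((a * star a) * (b * star b))
      = (a * star a) * (b * star b) := idem_mul_idem (idem_mss a) (idem_mss b)
  have m1 : (a * star a) * ((a * star a) * (b * star b)) = (a * star a) * (b * star b) := by
    rw [← mul_assoc, idem_mss]
  have m2 : (b * star b) * ((a * star a) * (b * star b)) = (a * star a) * (b * star b) := by
    rw [← mul_assoc, idem_comm (idem_mss b) (idem_mss a), mul_assoc, idem_mss]
  have k4 : (((a * star a) * (b * star b)) * a) * star (((a * star a) * (b * star b)) * a)
      = (a * star a) * (b * star b) := by
    rw [dom_of_mul, star_idem he, m1, he]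
  have k5 : (((a * star a) * (b * star b)) * b) * star (((a * star a) * (b * star b)) * b)
      = (a * star a) * (b * star b) := by
    rw [dom_of_mul, star_idem he, m2, he]
  have swap := eps_comm_of_eq (k4.trans k5.symm)
  calc eps a * eps b
      = eps (((a * star a) * (b * star b)) * a) * eps (((a * star a) * (b * star b)) * b) :=
        eps_half a b
    _ = eps (((a * star a) * (b * star b)) * b) * eps (((a * star a) * (b * star b)) * a) :=
        swap
    _ = eps (((b * star b) * (a * star a)) * b) * eps (((b * star b) * (a * star a)) * a) := by
        rw [idem_comm (idem_mss a) (idem_mss b)]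
    _ = eps b * eps a := (eps_half b a).symm

lemma eps_dom_unit (t : G) : eps (t * star t) * gen t = gen t := by
  show gen (t * star t) * gen (star (t * star t)) * gen t = gen t
  rw [star_idem (idem_mss t), gen_idem (idem_mss t)]
  exact gen_E2 t

lemma eps_dom (a t : G) : eps a * gen t = eps ((t * star t) * a) * gen t := by
  have h1 := eps_C2' (t * star t) a
  rw [star_idem (idem_mss t), idem_mss t] at h1
  calc eps a * gen t = eps a * (eps (t * star t) * gen t) := by rw [eps_dom_unit]
    _ = (eps a * eps (t * star t)) * gen t := (mul_assoc _ _ _).symm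
    _ = (eps ((t * star t) * a) * eps (t * star t)) * gen t := by rw [h1]
    _ = eps ((t * star t) * a) * (eps (t * star t) * gen t) := mul_assoc _ _ _
    _ = eps ((t * star t) * a) * gen t := by rw [eps_dom_unit]

end SGmore

end SGAux

open scoped Classical

namespace SGAux

section Lists
variable {G : Type u} [InverseSemigroup G]

lemma epsList_nil (x : SG G) : epsList [] x = x := rfl

lemma epsList_cons (a : G) (l : List G) (x : SG G) :
    epsList (a :: l) x = eps a * epsList l x := rfl

lemma epsList_append (l₁ l₂ : List G) (x : SG G) :
    epsList (l₁ ++ l₂) x = epsList l₁ (epsList l₂ x) := by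
  induction l₁ with
  | nil => rfl
  | cons a l ih => simp only [List.cons_append, epsList_cons, ih]

lemma epsList_mul (l : List G) (x y : SG G) :
    epsList l x * y = epsList l (x * y) := by
  induction l with
  | nil => rfl
  | cons a l ih => simp only [epsList_cons, mul_assoc, ih]

lemma epsList_perm {l l' : List G} (h : l.Perm l') (x : SG G) :
    epsList l x = epsList l' x := by
  induction h with
  | nil => rfl
  | cons a _ ih => simp only [epsList_cons, ih]
  | swap a b l =>
      simp only [epsList_cons, ← mul_assoc, eps_comm b a]
  | trans _ _ ih1 ih2 => exact ih1.trans ih2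

lemma eps_absorb {a : G} {l : List G} (h : a ∈ l) (x : SG G) :
    eps a * epsList l x = epsList l x := by
  induction l with
  | nil => exact absurd h List.not_mem_nil
  | cons b l ih =>
      rcases List.mem_cons.1 h with rfl | h'
      · rw [epsList_cons, ← mul_assoc, eps_idem]
      · rw [epsList_cons, ← mul_assoc, eps_comm a b, mul_assoc, ih h']

lemma epsList_toFinset (l : List G) (x : SG G) :
    epsList l x = epsSet l.toFinset x := by
  induction l with
  | nil =>
      show x = epsList (∅ : Finset G).toList x
      rw [Finset.toList_empty]
      rfl
  | cons a l ih =>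
      rw [List.toFinset_cons, epsList_cons, ih]
      by_cases hmem : a ∈ l.toFinset
      · rw [Finset.insert_eq_self.2 hmem]
        show eps a * epsList l.toFinset.toList x = _
        rw [eps_absorb (Finset.mem_toList.2 hmem)]
        rfl
      · show _ = epsList (insert a l.toFinset).toList x
        rw [epsList_perm (Finset.toList_insert hmem) x]
        rfl

lemma epsSet_union (A B : Finset G) (x : SG G) :
    epsSet (A ∪ B) x = epsSet A (epsSet B x) := by
  have h1 : epsList (A.toList ++ B.toList) x = epsSet (A ∪ B) x := by
    rw [epsList_toFinset, List.toFinset_append, Finset.toList_toFinset, Finset.toList_toFinset]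
  rw [← h1, epsList_append]
  show epsList A.toList (epsList B.toList x) = _
  rw [show epsList B.toList x = epsSet B x from rfl]
  rfl

omit [InverseSemigroup G] in
lemma toFinset_map (l : List G) (f : G → G) : (l.map f).toFinset = l.toFinset.image f := by
  induction l with
  | nil => simp
  | cons a l ih => simp [ih]

lemma gen_push (g : G) (l : List G) (x : SG G) :
    gen g * epsList l x = epsList (l.map (fun b => g * b)) (gen g * x) := by
  induction l with
  | nil => rfl
  | cons b l ih =>
      rw [epsList_cons, ← mul_assoc, gen_K, List.map_cons, epsList_cons, mul_assoc, ih]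

lemma eps_dom_ctx (a t : G) (l : List G) :
    eps a * epsList l (gen t) = eps ((t * star t) * a) * epsList l (gen t) := by
  induction l with
  | nil => exact eps_dom a t
  | cons c l ih =>
      rw [epsList_cons, ← mul_assoc, eps_comm a c, mul_assoc, ih, ← mul_assoc,
        eps_comm c _, mul_assoc]

lemma epsList_dom (l : List G) (t : G) :
    epsList l (gen t) = epsList (l.map (fun a => (t * star t) * a)) (gen t) := by
  induction l with
  | nil => rfl
  | cons a l ih =>
      rw [epsList_cons, ih, eps_dom_ctx, List.map_cons, epsList_cons]

end Lists

end SGAux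

namespace SGAux

section PP
variable {G : Type u} [InverseSemigroup G]

/-- Underlying carrier of the concrete model of S(G): pairs (A, g) in normal form. -/
def Wf (A : Finset G) (g : G) : Prop :=
  g ∈ A ∧ g * star g ∈ A ∧ ∀ a ∈ A, a * star a = g * star g

variable (G) in
/-- The concrete model of S(G). -/
def PP : Type u := {p : Finset G × G // Wf p.1 p.2}

/-- Product of the set parts. -/
noncomputable def pset (A B : Finset G) (g h : G) : Finset G :=
  A.image (fun a => ((g * h) * star (g * h)) * a) ∪ B.image (fun b => g * b)

lemma dom_absorb (x y : G) :
    ((x * y) * star (x * y)) * (x * star x) = (x * y) * star (x * y) := by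
  calc ((x * y) * star (x * y)) * (x * star x)
      = x * ((y * star y) * (star x * x)) * star x := by
        rw [star_mul]; simp only [mul_assoc]
    _ = x * ((star x * x) * (y * star y)) * star x := by
        rw [idem_comm (idem_mss y) (idem_sms x)]
    _ = (x * star x * x) * ((y * star y) * star x) := by simp only [mul_assoc]
    _ = x * (y * star y) * star x := by rw [mss]; simp only [mul_assoc]
    _ = (x * y) * star (x * y) := by rw [star_mul]; simp only [mul_assoc]

lemma swap_dom (x y b : G) :
    ((x * y) * star (x * y)) * (x * b) = x * (((y * star y) * star x) * (x * b)) := by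
  rw [star_mul]; simp only [mul_assoc]

lemma swap_dom' (x y b : G) :
    ((x * y) * star (x * y)) * (x * b) = x * ((y * star y) * b) := by
  rw [swap_dom]
  calc x * (((y * star y) * star x) * (x * b))
      = x * ((y * star y) * (star x * x) * b) := by simp only [mul_assoc]
    _ = x * ((star x * x) * (y * star y) * b) := by
        rw [idem_comm (idem_mss y) (idem_sms x)]
    _ = (x * star x * x) * ((y * star y) * b) := by simp only [mul_assoc]
    _ = x * ((y * star y) * b) := by rw [mss]

lemma idem_E (g h : G) :
    ((g * h) * star (g * h)) * ((g * h) * star (g * h)) = (g * h) * star (g * h) :=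
  idem_mss (g * h)

lemma wf_mul {A B : Finset G} {g h : G} (hp : Wf A g) (hq : Wf B h) :
    Wf (pset A B g h) (g * h) := by
  obtain ⟨hg, hgg, hA⟩ := hp
  obtain ⟨hh, hhh, hB⟩ := hq
  refine ⟨?_, ?_, ?_⟩
  · refine Finset.mem_union_right _ ?_
    exact Finset.mem_image_of_mem (fun b => g * b) hh
  · refine Finset.mem_union_left _ ?_
    have := Finset.mem_image_of_mem (fun a => ((g*h) * star (g*h)) * a) hgg
    rwa [show ((g*h) * star (g*h)) * (g * star g) = (g*h) * star (g*h) from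
      dom_absorb g h] at this
  · intro c hc
    rcases Finset.mem_union.1 hc with hc | hc
    · obtain ⟨a, ha, rfl⟩ := Finset.mem_image.1 hc
      have haa := hA a ha
      have hE := star_idem (idem_E g h)
      calc (((g*h) * star (g*h)) * a) * star (((g*h) * star (g*h)) * a)
          = ((g*h) * star (g*h)) * ((a * star a) * star ((g*h) * star (g*h))) :=
            dom_of_mul _ a
        _ = ((g*h) * star (g*h)) * ((g * star g) * ((g*h) * star (g*h))) := by
            rw [haa, hE]
        _ = (((g*h) * star (g*h)) * (g * star g)) * ((g*h) * star (g*h)) :=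
            (mul_assoc _ _ _).symm
        _ = (g*h) * star (g*h) := by rw [dom_absorb, idem_E]
    · obtain ⟨b, hb, rfl⟩ := Finset.mem_image.1 hc
      have hbb := hB b hb
      calc (g * b) * star (g * b) = g * ((b * star b) * star g) := dom_of_mul g b
        _ = g * ((h * star h) * star g) := by rw [hbb]
        _ = (g*h) * star (g*h) := (dom_of_mul g h).symm

noncomputable instance : Mul (PP G) :=
  ⟨fun p q => ⟨(pset p.1.1 q.1.1 p.1.2 q.1.2, p.1.2 * q.1.2), wf_mul p.2 q.2⟩⟩

lemma PP.mul_fst (p q : PP G) : (p * q).1.1 = pset p.1.1 q.1.1 p.1.2 q.1.2 := rfl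
lemma PP.mul_snd (p q : PP G) : (p * q).1.2 = p.1.2 * q.1.2 := rfl

lemma pp_assoc_aux1 (g h k b : G) :
    ((g * (h * k)) * star (g * (h * k))) * (((g * h) * star (g * h)) * b)
      = ((g * (h * k)) * star (g * (h * k))) * b := by
  rw [← mul_assoc, show (g * (h * k)) = (g * h) * k from (mul_assoc g h k).symm, dom_absorb]

lemma pp_assoc_aux2 (g h k b : G) :
    ((g * (h * k)) * star (g * (h * k))) * (g * b) = g * (((h * k) * star (h * k)) * b) :=
  swap_dom' g (h * k) b

noncomputable instance : Semigroup (PP G) where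
  mul_assoc p q r := by
    obtain ⟨⟨A, g⟩, hp⟩ := p
    obtain ⟨⟨B, h⟩, hq⟩ := q
    obtain ⟨⟨C, k⟩, hr⟩ := r
    apply Subtype.ext
    apply Prod.ext
    · show pset (pset A B g h) C (g*h) k = pset A (pset B C h k) g (h*k)
      have e1 : (Finset.image (fun a => ((g*h) * star (g*h)) * a) A).image
            (fun a => ((g*h*k) * star (g*h*k)) * a)
          = A.image (fun a => ((g*(h*k)) * star (g*(h*k))) * a) := by
        rw [Finset.image_image]
        apply Finset.image_congr
        intro a _
        show ((g*h*k) * star (g*h*k)) * (((g*h) * star (g*h)) * a) = _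
        rw [show g*(h*k) = g*h*k from (mul_assoc g h k).symm, ← mul_assoc, dom_absorb]
      have e2 : (Finset.image (fun b => g * b) B).image (fun a => ((g*h*k) * star (g*h*k)) * a)
          = Finset.image (fun b => g * b) (B.image (fun b => ((h*k) * star (h*k)) * b)) := by
        rw [Finset.image_image, Finset.image_image]
        apply Finset.image_congr
        intro b _
        show ((g*h*k) * star (g*h*k)) * (g * b) = g * (((h*k) * star (h*k)) * b)
        rw [show g*h*k = g*(h*k) from mul_assoc g h k]
        exact swap_dom' g (h*k) b
      have e3 : C.image (fun c => (g*h) * c) = Finset.image (fun b => g * b)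
          (C.image (fun c => h * c)) := by
        rw [Finset.image_image]
        apply Finset.image_congr
        intro c _
        exact mul_assoc g h c
      show (pset A B g h).image (fun a => ((g*h*k) * star (g*h*k)) * a)
            ∪ C.image (fun c => (g*h) * c)
          = A.image (fun a => ((g*(h*k)) * star (g*(h*k))) * a)
            ∪ (pset B C h k).image (fun b => g * b)
      rw [pset, pset, Finset.image_union, Finset.image_union, e1, e2, e3,
        Finset.union_assoc]
    · exact mul_assoc g h k

end PP

end SGAux

namespace SGAux

section Phi
variable {G : Type u} [InverseSemigroup G]

/-- The generator images in the concrete model. -/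
noncomputable def sigma (s : G) : PP G :=
  ⟨({s, s * star s}, s), by
    refine ⟨Finset.mem_insert_self _ _, Finset.mem_insert_of_mem (Finset.mem_singleton_self _), ?_⟩
    intro a ha
    rcases Finset.mem_insert.1 ha with rfl | ha
    · rfl
    · have h := Finset.mem_singleton.1 ha
      subst h
      show (s * star s) * star (s * star s) = s * star s
      rw [star_idem (idem_mss s)]
      exact idem_mss s⟩

lemma sigma_fst (s : G) : (sigma s).1.1 = {s, s * star s} := rfl
lemma sigma_snd (s : G) : (sigma s).1.2 = s := rfl

lemma sms_ctx (t x : G) : star t * (t * (star t * x)) = star t * x := by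
  rw [← mul_assoc, ← mul_assoc, sms]

lemma mss_ctx (t x : G) : t * (star t * (t * x)) = t * x := by
  rw [← mul_assoc, ← mul_assoc, mss]

lemma phi_rel1 (s t : G) : sigma s * sigma t * sigma (star t) = sigma (s * t) * sigma (star t) := by
  have uE : s*t*star t*star (s*t*star t) = s*t*star (s*t) := by
    calc s*t*star t*star (s*t*star t)
        = s*(t*(star t*(t*star (s*t)))) := by rw [star_mul, star_star]; simp only [mul_assoc]
      _ = s*(t*(star t*(t*(star t*star s)))) := by rw [star_mul s t]
      _ = s*(t*(star t*star s)) := by rw [sms_ctx]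
      _ = s*t*star (s*t) := by rw [star_mul s t]; simp only [mul_assoc]
  have hEs : s*t*star (s*t)*s = s*(t*star t) := by
    rw [star_mul]
    calc s*t*(star t*star s)*s
        = s*((t*star t)*(star s*s)) := by simp only [mul_assoc]
      _ = s*((star s*s)*(t*star t)) := by rw [idem_comm (idem_mss t) (idem_sms s)]
      _ = (s*star s*s)*(t*star t) := by simp only [mul_assoc]
      _ = s*(t*star t) := by rw [mss]
  have iA : s*t*star (s*t)*(s*t*star (s*t)*s) = s*t*star t := by
    rw [← mul_assoc, idem_E, hEs, ← mul_assoc]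
  have iB : s*t*star (s*t)*(s*t*star (s*t)*(s*star s)) = s*t*star (s*t)*(s*t*star (s*t)) :=
    congrArg (fun z => s*t*star (s*t)*z) (dom_absorb s t)
  have iC : s*t*star (s*t)*(s*(t*star t)) = s*t*star t := by
    rw [← hEs, ← mul_assoc, idem_E, hEs, ← mul_assoc]
  apply Subtype.ext
  apply Prod.ext
  · show pset (pset {s, s * star s} {t, t * star t} s t)
        {star t, star t * star (star t)} (s * t) (star t)
      = pset {s * t, (s * t) * star (s * t)} {star t, star t * star (star t)} (s * t) (star t)
    simp only [pset, Finset.image_union, Finset.image_insert, Finset.image_singleton, star_star]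
    rw [uE]
    apply Finset.ext
    intro c
    simp only [Finset.mem_union, Finset.mem_insert, Finset.mem_singleton]
    constructor
    · rintro (((rfl | rfl) | (rfl | rfl)) | (rfl | rfl))
      · exact Or.inr (Or.inl iA)
      · exact Or.inl (Or.inr iB)
      · exact Or.inl (Or.inl rfl)
      · exact Or.inr (Or.inl iC)
      · exact Or.inr (Or.inl rfl)
      · exact Or.inr (Or.inr rfl)
    · rintro ((rfl | rfl) | (rfl | rfl))
      · exact Or.inl (Or.inr (Or.inl rfl))
      · exact Or.inl (Or.inl (Or.inr iB.symm))
      · exact Or.inr (Or.inl rfl)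
      · exact Or.inr (Or.inr rfl)
  · rfl

end Phi

end SGAux

namespace SGAux

section Phi2
variable {G : Type u} [InverseSemigroup G]

lemma phi_rel2 (s t : G) : sigma (star s) * sigma s * sigma t = sigma (star s) * sigma (s * t) := by
  have e3 : star s*s*star (star s*s) = star s*s := by
    rw [star_idem (idem_sms s)]; exact idem_sms s
  have ce : star (s*t)*(s*star s) = star (s*t) := by
    rw [star_mul]
    calc star t*star s*(s*star s) = star t*(star s*s*star s) := by simp only [mul_assoc]
      _ = star t*star s := by rw [sms]
  have w4 : star s*(s*t)*star (star s*(s*t))*star s = star s*(s*t*star (s*t)) := by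
    rw [star_mul (star s) (s*t), star_star]
    calc star s*(s*t)*(star (s*t)*s)*star s
        = star s*((s*t)*(star (s*t)*(s*star s))) := by simp only [mul_assoc]
      _ = star s*((s*t)*star (s*t)) := by rw [ce]
  have w5a : star (star s*(s*t))*(star s*s) = star (star s*(s*t)) := by
    rw [star_mul (star s) (s*t), star_star]
    calc star (s*t)*s*(star s*s) = star (s*t)*(s*star s*s) := by simp only [mul_assoc]
      _ = star (s*t)*s := by rw [mss]
  have w5b : star s*(s*t)*star (star s*(s*t)) = star s*s*(t*star t) := by
    rw [star_mul (star s) (s*t), star_star, star_mul s t]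
    calc star s*(s*t)*(star t*star s*s)
        = (star s*s)*((t*star t)*(star s*s)) := by simp only [mul_assoc]
      _ = (star s*s)*((star s*s)*(t*star t)) := by rw [idem_comm (idem_mss t) (idem_sms s)]
      _ = ((star s*s)*(star s*s))*(t*star t) := (mul_assoc _ _ _).symm
      _ = (star s*s)*(t*star t) := by rw [idem_sms]
  have w5 : star s*(s*t)*star (star s*(s*t))*(star s*s) = star s*s*(t*star t) := by
    rw [mul_assoc, w5a, w5b]
  have q1 : star s*(s*t)*star (star s*(s*t))*(star s*s*star (star s*s)*star s)
      = star s*(s*t)*star (star s*(s*t))*star s := by rw [e3, sms]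
  have q2 : star s*(s*t)*star (star s*(s*t))*(star s*s*star (star s*s)*(star s*s))
      = star s*(s*t)*star (star s*(s*t))*(star s*s) := by rw [e3, idem_sms]
  have q4 : star s*(s*t)*star (star s*(s*t))*(star s*(s*star s))
      = star s*(s*t)*star (star s*(s*t))*star s := by rw [sms']
  apply Subtype.ext
  apply Prod.ext
  · show pset (pset {star s, star s * star (star s)} {s, s * star s} (star s) s)
        {t, t * star t} (star s * s) t
      = pset {star s, star s * star (star s)} {s * t, (s * t) * star (s * t)} (star s) (s * t)
    simp only [pset, Finset.image_union, Finset.image_insert, Finset.image_singleton, star_star]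
    rw [mul_assoc (star s) s t]
    apply Finset.ext
    intro c
    simp only [Finset.mem_union, Finset.mem_insert, Finset.mem_singleton]
    constructor
    · rintro (((rfl | rfl) | (rfl | rfl)) | (rfl | rfl))
      · exact Or.inl (Or.inl q1)
      · exact Or.inl (Or.inr q2)
      · exact Or.inl (Or.inr rfl)
      · exact Or.inl (Or.inl q4)
      · exact Or.inr (Or.inl rfl)
      · exact Or.inl (Or.inr w5.symm)
    · rintro ((rfl | rfl) | (rfl | rfl))
      · exact Or.inl (Or.inl (Or.inl q1.symm))
      · exact Or.inl (Or.inr (Or.inl rfl))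
      · exact Or.inr (Or.inl rfl)
      · exact Or.inl (Or.inl (Or.inl (w4.symm.trans q1.symm)))
  · exact mul_assoc _ _ _

end Phi2

end SGAux

namespace SGAux

section Phi3
variable {G : Type u} [InverseSemigroup G]

lemma phi_rel3 (s : G) : sigma s * sigma (star s) * sigma s = sigma s := by
  apply Subtype.ext
  apply Prod.ext
  · show pset (pset {s, s * star s} {star s, star s * star (star s)} s (star s))
        {s, s * star s} (s * star s) s
      = {s, s * star s}
    simp only [pset, Finset.image_union, Finset.image_insert, Finset.image_singleton, star_star]
    rw [mss s, star_idem (idem_mss s), idem_mss s, mss s]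
    rw [idem_mss s, idem_mss s, mss' s, mss s]
    apply Finset.ext
    intro c
    simp only [Finset.mem_union, Finset.mem_insert, Finset.mem_singleton]
    tauto
  · exact mss s

end Phi3

end SGAux

namespace SGAux

section PhiDef
variable {G : Type u} [InverseSemigroup G]

/-- Lift of sigma to the free semigroup. -/
noncomputable def PhiF : FreeSemigroup G →ₙ* PP G := FreeSemigroup.lift sigma

lemma PhiF_of (s : G) : PhiF (FreeSemigroup.of s) = sigma s := FreeSemigroup.lift_of _ _

lemma PhiF_resp : ∀ w₁ w₂ : FreeSemigroup G, expCon G w₁ w₂ → PhiF w₁ = PhiF w₂ := by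
  intro w₁ w₂ h
  induction h with
  | of x y h =>
    cases h with
    | rel1 s t =>
      rw [map_mul, map_mul, map_mul, PhiF_of, PhiF_of, PhiF_of, PhiF_of]
      exact phi_rel1 s t
    | rel2 s t =>
      rw [map_mul, map_mul, map_mul, PhiF_of, PhiF_of, PhiF_of, PhiF_of]
      exact phi_rel2 s t
    | rel3 s =>
      rw [map_mul, map_mul, PhiF_of, PhiF_of]
      exact phi_rel3 s
  | refl => rfl
  | symm _ ih => exact ih.symm
  | trans _ _ ih1 ih2 => exact ih1.trans ih2
  | mul _ _ ih1 ih2 => rw [map_mul, map_mul, ih1, ih2]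

/-- The homomorphism S(G) → PP. -/
noncomputable def phi (x : SG G) : PP G := Con.liftOn x (fun w => PhiF w) PhiF_resp

lemma phi_mul (x y : SG G) : phi (x * y) = phi x * phi y := by
  induction x, y using Con.induction_on₂ with
  | _ a b =>
    show PhiF (a * b) = PhiF a * PhiF b
    exact map_mul _ _ _

lemma phi_gen (s : G) : phi (gen s) = sigma s := PhiF_of s

/-- Inverse in the concrete model. -/
noncomputable def pinv (p : PP G) : PP G :=
  ⟨(p.1.1.image (fun a => star p.1.2 * a), star p.1.2), by
    obtain ⟨⟨A, g⟩, h1, h2, h3⟩ := p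
    refine ⟨?_, ?_, ?_⟩
    · have := Finset.mem_image_of_mem (fun a => star g * a) h2
      rwa [show star g * (g * star g) = star g from sms' g] at this
    · rw [star_star]
      exact Finset.mem_image_of_mem _ h1
    · intro c hc
      obtain ⟨a, ha, rfl⟩ := Finset.mem_image.1 hc
      have haa := h3 a ha
      rw [star_star]
      calc (star g * a) * star (star g * a)
          = star g * ((a * star a) * star (star g)) := dom_of_mul _ a
        _ = star g * ((g * star g) * g) := by rw [haa, star_star]
        _ = star g * g := by rw [mss]⟩

lemma image_dom_id {A : Finset G} {g : G} (h : ∀ a ∈ A, a * star a = g * star g) :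
    A.image (fun a => (g * star g) * a) = A := by
  have : A.image (fun a => (g * star g) * a) = A.image id := by
    apply Finset.image_congr
    intro a ha
    show (g * star g) * a = a
    rw [← h a ha]
    exact mss a
  rw [this, Finset.image_id]

lemma pinv_spec1 (p : PP G) : p * pinv p * p = p := by
  obtain ⟨⟨A, g⟩, hw⟩ := p
  apply Subtype.ext
  apply Prod.ext
  · show pset (pset A (A.image (fun a => star g * a)) g (star g)) A (g * star g) g = A
    have n1 : (g * star g) * star (g * star g) = g * star g := by
      rw [star_idem (idem_mss g)]; exact idem_mss g
    have step2 : pset A (A.image (fun a => star g * a)) g (star g) = A := by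
      show A.image (fun a => ((g * star g) * star (g * star g)) * a)
          ∪ (A.image (fun a => star g * a)).image (fun b => g * b) = A
      rw [n1, Finset.image_image]
      rw [show ((fun b => g * b) ∘ fun a => star g * a) = (fun a => (g * star g) * a) from
        funext fun a => (mul_assoc g (star g) a).symm]
      rw [image_dom_id hw.2.2, Finset.union_self]
    rw [step2]
    show A.image (fun a => ((g * star g * g) * star (g * star g * g)) * a)
        ∪ A.image (fun b => (g * star g) * b) = A
    rw [mss, image_dom_id hw.2.2, Finset.union_self]
  · exact mss g

lemma sms_img {A : Finset G} (g : G) :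
    (A.image (fun a => star g * a)).image (fun b => (star g * g) * b)
      = A.image (fun a => star g * a) := by
  rw [Finset.image_image]
  apply Finset.image_congr
  intro a _
  show (star g * g) * (star g * a) = star g * a
  rw [← mul_assoc, sms]

lemma pinv_spec2 (p : PP G) : pinv p * p * pinv p = pinv p := by
  obtain ⟨⟨A, g⟩, hw⟩ := p
  apply Subtype.ext
  apply Prod.ext
  · show pset (pset (A.image (fun a => star g * a)) A (star g) g)
        (A.image (fun a => star g * a)) (star g * g) (star g)
      = A.image (fun a => star g * a)
    have n1 : (star g * g) * star (star g * g) = star g * g := by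
      rw [star_idem (idem_sms g)]; exact idem_sms g
    have step2 : pset (A.image (fun a => star g * a)) A (star g) g
        = A.image (fun a => star g * a) := by
      show (A.image (fun a => star g * a)).image
            (fun a => ((star g * g) * star (star g * g)) * a)
          ∪ A.image (fun b => star g * b) = A.image (fun a => star g * a)
      rw [n1, sms_img, Finset.union_self]
    rw [step2]
    show (A.image (fun a => star g * a)).image
          (fun a => ((star g * g * star g) * star (star g * g * star g)) * a)
        ∪ (A.image (fun a => star g * a)).image (fun b => (star g * g) * b)
      = A.image (fun a => star g * a)
    rw [sms, star_star, sms_img, Finset.union_self]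
  · exact sms g

lemma pp_idem_comm (p q : PP G) (hp : p * p = p) (hq : q * q = q) : p * q = q * p := by
  obtain ⟨⟨A, e⟩, hwp⟩ := p
  obtain ⟨⟨B, f⟩, hwq⟩ := q
  have he : e * e = e := congrArg (fun z : PP G => z.1.2) hp
  have hf : f * f = f := congrArg (fun z : PP G => z.1.2) hq
  have hef : (e * f) * (e * f) = e * f := idem_mul_idem he hf
  have hA : ∀ a ∈ A, e * a = a := by
    intro a ha
    have h := hwp.2.2 a ha
    rw [star_idem he, he] at h
    rw [← h]
    exact mss a
  have hB : ∀ b ∈ B, f * b = b := by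
    intro b hb
    have h := hwq.2.2 b hb
    rw [star_idem hf, hf] at h
    rw [← h]
    exact mss b
  apply Subtype.ext
  apply Prod.ext
  · show pset A B e f = pset B A f e
    show A.image (fun a => ((e*f) * star (e*f)) * a) ∪ B.image (fun b => e * b)
        = B.image (fun b => ((f*e) * star (f*e)) * b) ∪ A.image (fun a => f * a)
    have e1 : A.image (fun a => ((e*f) * star (e*f)) * a) = A.image (fun a => (e*f) * a) := by
      apply Finset.image_congr
      intro a _
      show ((e*f) * star (e*f)) * a = (e*f) * a
      rw [star_idem hef, hef]
    have e2 : B.image (fun b => e * b) = B.image (fun b => (e*f) * b) := by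
      apply Finset.image_congr
      intro b hb
      show e * b = e * f * b
      rw [mul_assoc, hB b hb]
    have f1 : B.image (fun b => ((f*e) * star (f*e)) * b) = B.image (fun b => (e*f) * b) := by
      apply Finset.image_congr
      intro b _
      show ((f*e) * star (f*e)) * b = (e*f) * b
      rw [star_idem (idem_mul_idem hf he), idem_mul_idem hf he, idem_comm hf he]
    have f2 : A.image (fun a => f * a) = A.image (fun a => (e*f) * a) := by
      apply Finset.image_congr
      intro a ha
      show f * a = e * f * a
      rw [idem_comm he hf, mul_assoc, hA a ha]
    rw [e1, e2, f1, f2]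
    exact Finset.union_comm _ _
  · exact idem_comm he hf

end PhiDef

end SGAux

namespace SGAux

lemma inv_unique {H : Type v} [Semigroup H]
    (hcomm : ∀ u v : H, u * u = u → v * v = v → u * v = v * u)
    {x y y' : H} (h1 : x * y * x = x) (h2 : y * x * y = y)
    (h3 : x * y' * x = x) (h4 : y' * x * y' = y') : y = y' := by
  have iyx : (y * x) * (y * x) = y * x := by
    calc (y * x) * (y * x) = y * (x * y * x) := by simp only [mul_assoc]
      _ = y * x := by rw [h1]
  have iy'x : (y' * x) * (y' * x) = y' * x := by
    calc (y' * x) * (y' * x) = y' * (x * y' * x) := by simp only [mul_assoc]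
      _ = y' * x := by rw [h3]
  have ixy : (x * y) * (x * y) = x * y := by
    calc (x * y) * (x * y) = (x * y * x) * y := by simp only [mul_assoc]
      _ = x * y := by rw [h1]
  have ixy' : (x * y') * (x * y') = x * y' := by
    calc (x * y') * (x * y') = (x * y' * x) * y' := by simp only [mul_assoc]
      _ = x * y' := by rw [h3]
  have key1 : y = y' * x * y := by
    calc y = y * x * y := h2.symm
      _ = y * (x * y' * x) * y := by rw [h3]
      _ = ((y * x) * (y' * x)) * y := by simp only [mul_assoc]
      _ = ((y' * x) * (y * x)) * y := by rw [hcomm _ _ iyx iy'x]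
      _ = y' * ((x * y * x) * y) := by simp only [mul_assoc]
      _ = y' * (x * y) := by rw [h1]
      _ = y' * x * y := (mul_assoc _ _ _).symm
  have key2 : y' = y' * x * y := by
    calc y' = y' * x * y' := h4.symm
      _ = y' * (x * y * x) * y' := by rw [h1]
      _ = y' * ((x * y) * (x * y')) := by simp only [mul_assoc]
      _ = y' * ((x * y') * (x * y)) := by rw [hcomm _ _ ixy ixy']
      _ = (y' * x * y') * (x * y) := by simp only [mul_assoc]
      _ = y' * (x * y) := by rw [h4]
      _ = y' * x * y := (mul_assoc _ _ _).symm
  exact key1.trans key2.symm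

section Psi
variable {G : Type u} [InverseSemigroup G]

/-- The normal-form evaluation map. -/
noncomputable def psi (p : PP G) : SG G := epsSet p.1.1 (gen p.1.2)

lemma dom_g (g h : G) : g * h * star (g * h) * g = g * (h * star h) := by
  rw [star_mul]
  calc g * h * (star h * star g) * g
      = g * ((h * star h) * (star g * g)) := by simp only [mul_assoc]
    _ = g * ((star g * g) * (h * star h)) := by rw [idem_comm (idem_mss h) (idem_sms g)]
    _ = (g * star g * g) * (h * star h) := by simp only [mul_assoc]
    _ = g * (h * star h) := by rw [mss]

lemma epsSet_singleton (a : G) (x : SG G) : epsSet {a} x = eps a * x := by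
  show epsList ({a} : Finset G).toList x = _
  rw [Finset.toList_singleton]
  rfl

lemma eps_gen (s : G) : eps s * gen s = gen s := gen_rel3 s

lemma psi_mul (p q : PP G) : psi (p * q) = psi p * psi q := by
  obtain ⟨⟨A, g⟩, hp⟩ := p
  obtain ⟨⟨B, h⟩, hq⟩ := q
  have key : ∀ L : List G, epsList L (gen (g * h))
      = epsSet ((L.map (fun a => g * h * star (g * h) * a)).toFinset) (gen (g * h)) :=
    fun L => (epsList_dom L (g * h)).trans (epsList_toFinset _ _)
  have hz : g * h * star (g * h) * (g * (h * star h)) = g * h * star (g * h) * g := by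
    rw [swap_dom', idem_mss, dom_g]
  have hw : g * h * star (g * h) * g
      ∈ (B.image (fun b => g * b)).image (fun a => g * h * star (g * h) * a) := by
    have hm : h * star h ∈ B := hq.2.1
    have := Finset.mem_image_of_mem (fun a => g * h * star (g * h) * a)
      (Finset.mem_image_of_mem (fun b => g * b) hm)
    rwa [show g * h * star (g * h) * (g * (h * star h))
      = g * h * star (g * h) * g from hz] at this
  have c1 : (A.image (fun a => g * h * star (g * h) * a)).image
      (fun a => g * h * star (g * h) * a) = A.image (fun a => g * h * star (g * h) * a) := by
    rw [Finset.image_image]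
    apply Finset.image_congr
    intro a _
    show g * h * star (g * h) * (g * h * star (g * h) * a) = g * h * star (g * h) * a
    rw [← mul_assoc, idem_E]
  have fq : (((pset A B g h).toList.map (fun a => g * h * star (g * h) * a)).toFinset
        : Finset G)
      = ((A.toList ++ (B.toList.map (fun b => g * b) ++ [g])).map
          (fun a => g * h * star (g * h) * a)).toFinset := by
    rw [toFinset_map, Finset.toList_toFinset, List.map_append, List.map_append,
      List.toFinset_append, List.toFinset_append, toFinset_map, toFinset_map,
      Finset.toList_toFinset, toFinset_map, Finset.toList_toFinset]
    show (pset A B g h).image (fun a => g * h * star (g * h) * a)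
        = A.image (fun a => g * h * star (g * h) * a)
          ∪ ((B.image (fun b => g * b)).image (fun a => g * h * star (g * h) * a)
            ∪ ([g].map (fun a => g * h * star (g * h) * a)).toFinset)
    have : (([g].map (fun a => g * h * star (g * h) * a)).toFinset : Finset G)
        = {g * h * star (g * h) * g} := rfl
    rw [this, Finset.union_eq_left.2 (Finset.singleton_subset_iff.2 hw)]
    show (A.image (fun a => g * h * star (g * h) * a)
          ∪ B.image (fun b => g * b)).image (fun a => g * h * star (g * h) * a) = _
    rw [Finset.image_union, c1]
  calc psi (⟨(A, g), hp⟩ * ⟨(B, h), hq⟩ : PP G)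
      = epsSet (((pset A B g h).toList.map (fun a => g * h * star (g * h) * a)).toFinset)
          (gen (g * h)) := key _
    _ = epsSet (((A.toList ++ (B.toList.map (fun b => g * b) ++ [g])).map
          (fun a => g * h * star (g * h) * a)).toFinset) (gen (g * h)) := by rw [fq]
    _ = epsList (A.toList ++ (B.toList.map (fun b => g * b) ++ [g])) (gen (g * h)) :=
        (key _).symm
    _ = epsList A.toList (epsList (B.toList.map (fun b => g * b))
          (epsList [g] (gen (g * h)))) := by rw [epsList_append, epsList_append]
    _ = epsList A.toList (epsList (B.toList.map (fun b => g * b))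
          (gen g * gen h)) := by rw [show epsList [g] (gen (g * h)) = eps g * gen (g * h)
            from rfl, ← gen_mul_eps]
    _ = epsList A.toList (gen g * epsList B.toList (gen h)) := by rw [gen_push]
    _ = psi (⟨(A, g), hp⟩ : PP G) * psi (⟨(B, h), hq⟩ : PP G) := (epsList_mul _ _ _).symm

lemma psi_phi (x : SG G) : psi (phi x) = x := by
  induction x using Con.induction_on with
  | _ w =>
    induction w using FreeSemigroup.recOnMul with
    | ih1 s =>
      show psi (phi (gen s)) = gen s
      rw [phi_gen]
      show epsSet {s, s * star s} (gen s) = gen s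
      rw [Finset.insert_eq, epsSet_union, epsSet_singleton, epsSet_singleton,
        eps_dom_unit, eps_gen]
    | ih2 s w ih1 ih2 =>
      rw [Con.coe_mul]
      exact (congrArg psi (phi_mul _ _)).trans ((psi_mul _ _).trans (by rw [ih1, ih2]; rfl))

end Psi

end SGAux

theorem SG_inverse_semigroup (G : Type u) [InverseSemigroup G] (x : SG G) :
    ∃! y : SG G, x * y * x = x ∧ y * x * y = y := by
  open SGAux in
  refine ⟨psi (pinv (phi x)), ⟨?_, ?_⟩, ?_⟩
  · calc x * psi (pinv (phi x)) * x
        = psi (phi x) * psi (pinv (phi x)) * psi (phi x) := by rw [psi_phi]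
      _ = psi (phi x * pinv (phi x) * phi x) := by rw [psi_mul, psi_mul]
      _ = psi (phi x) := by rw [pinv_spec1]
      _ = x := psi_phi x
  · calc psi (pinv (phi x)) * x * psi (pinv (phi x))
        = psi (pinv (phi x)) * psi (phi x) * psi (pinv (phi x)) := by rw [psi_phi]
      _ = psi (pinv (phi x) * phi x * pinv (phi x)) := by rw [psi_mul, psi_mul]
      _ = psi (pinv (phi x)) := by rw [pinv_spec2]
  · rintro y' ⟨h3, h4⟩
    have hy1 : x * psi (pinv (phi x)) * x = x := by
      calc x * psi (pinv (phi x)) * x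
          = psi (phi x) * psi (pinv (phi x)) * psi (phi x) := by rw [psi_phi]
        _ = psi (phi x * pinv (phi x) * phi x) := by rw [psi_mul, psi_mul]
        _ = psi (phi x) := by rw [pinv_spec1]
        _ = x := psi_phi x
    have hy2 : psi (pinv (phi x)) * x * psi (pinv (phi x)) = psi (pinv (phi x)) := by
      calc psi (pinv (phi x)) * x * psi (pinv (phi x))
          = psi (pinv (phi x)) * psi (phi x) * psi (pinv (phi x)) := by rw [psi_phi]
        _ = psi (pinv (phi x) * phi x * pinv (phi x)) := by rw [psi_mul, psi_mul]
        _ = psi (pinv (phi x)) := by rw [pinv_spec2]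
    have k1 : phi x * phi y' * phi x = phi x := by
      rw [← phi_mul, ← phi_mul, h3]
    have k2 : phi y' * phi x * phi y' = phi y' := by
      rw [← phi_mul, ← phi_mul, h4]
    have k3 : phi x * phi (psi (pinv (phi x))) * phi x = phi x := by
      rw [← phi_mul, ← phi_mul, hy1]
    have k4 : phi (psi (pinv (phi x))) * phi x * phi (psi (pinv (phi x)))
        = phi (psi (pinv (phi x))) := by
      rw [← phi_mul, ← phi_mul, hy2]
    have heq : phi y' = phi (psi (pinv (phi x))) :=
      inv_unique (fun u v hu hv => pp_idem_comm u v hu hv) k1 k2 k3 k4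
    calc y' = psi (phi y') := (psi_phi y').symm
      _ = psi (phi (psi (pinv (phi x)))) := by rw [heq]
      _ = psi (pinv (phi x)) := psi_phi _
end

section
/- For every semigroup H and every partial homomorphism π: G → H (a map satisfying π(s)π(t)π(t*)=π(st)π(t*), π(s*)π(s)π(t)=π(s*)π(st), and π(s)π(s*)π(s)=π(s) for all s,t), there exists a unique semigroup homomorphism π̃: S(G) → H with π̃([s]) = π(s) for all s ∈ G. -/
universe u v

variable (G : Type u) [InverseSemigroup G]

variable {G}

theorem universal_property (G : Type u) [InverseSemigroup G] (H : Type v) [Semigroup H]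
    (π : G → H) (hπ : IsPartialHom π) :
    ∃! f : SG G →ₙ* H, ∀ s : G, f (gen s) = π s := by
  have h : expCon G ≤ Con.ker (FreeSemigroup.lift π) := by
    refine Con.conGen_le.2 fun x y hxy => ?_
    cases hxy with
    | rel1 s t => simpa [Con.ker_rel] using hπ.rel1 s t
    | rel2 s t => simpa [Con.ker_rel] using hπ.rel2 s t
    | rel3 s => simpa [Con.ker_rel] using hπ.rel3 s
  refine ⟨⟨fun x => Con.liftOn x (FreeSemigroup.lift π) (fun a b hab => h hab), ?_⟩,
    fun s => ?_, fun g hg => ?_⟩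
  · intro x y
    refine Con.induction_on₂ x y fun a b => ?_
    show Con.liftOn ((↑(a * b) : (expCon G).Quotient)) _ _ = _
    show FreeSemigroup.lift π (a * b) = _
    rw [map_mul]; rfl
  · show FreeSemigroup.lift π (.of s) = π s
    simp
  · ext x
    refine Con.induction_on x ?_
    intro w
    induction w using FreeSemigroup.recOnMul with
    | ih1 s => exact (hg s).trans ((FreeSemigroup.lift_of π s).symm)
    | ih2 a b ha hb =>
      have e : ((↑(FreeSemigroup.of a * b) : (expCon G).Quotient)) = (↑(FreeSemigroup.of a) : (expCon G).Quotient) * (↑b : (expCon G).Quotient) := rfl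
      show g ((↑(FreeSemigroup.of a * b) : (expCon G).Quotient)) = _
      rw [e]
      refine (map_mul g ((↑(FreeSemigroup.of a) : (expCon G).Quotient) : SG G) ((↑b : (expCon G).Quotient) : SG G)).trans ?_
      refine (congrArg₂ (· * ·) ha hb).trans ?_
      exact (map_mul _ _ _).symm
end

section
/- If π: G → H is a partial homomorphism of an inverse semigroup G into a semigroup H, then for every idempotent e of G the element π(e) is idempotent, and for all s∈G one has π(e)π(s)=π(es) and π(s)π(e)=π(se). -/
universe u v

variable (G : Type u) [InverseSemigroup G]

variable {G}

theorem partialHom_idempotent (G : Type u) [InverseSemigroup G] (H : Type v) [Semigroup H]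
    (π : G → H) (hπ : IsPartialHom π) (e : G) (he : e * e = e) :
    π e * π e = π e ∧ ∀ s : G, π e * π s = π (e * s) ∧ π s * π e = π (s * e) := by
  obtain ⟨h1, h2, h3⟩ := hπ
  have hse : star e = e :=
    (InverseSemigroup.star_unique e e (by rw [he, he]) (by rw [he, he])).symm
  have key : ∀ t : G, e * t = t → π e * π t = π t := by
    intro t ht
    have h := h1 e t
    rw [ht] at h
    calc π e * π t = π e * (π t * π (star t) * π t) := by rw [h3]
      _ = π e * π t * π (star t) * π t := by simp [mul_assoc]
      _ = π t * π (star t) * π t := by rw [h]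
      _ = π t := h3 t
  have key2 : ∀ t : G, t * e = t → π t * π e = π t := by
    intro t ht
    have h := h2 t e
    rw [ht] at h
    calc π t * π e = π t * π (star t) * π t * π e := by rw [h3]
      _ = π t * (π (star t) * π t * π e) := by simp [mul_assoc]
      _ = π t * (π (star t) * π t) := by rw [h]
      _ = π t := by rw [← mul_assoc, h3]
  have hee : π e * π e = π e := key e he
  refine ⟨hee, fun s => ⟨?_, ?_⟩⟩
  · have h := h2 e s
    rw [hse, hee] at h
    rw [h, key (e * s) (by rw [← mul_assoc, he])]
  · have h := h1 s e
    rw [hse, mul_assoc, hee] at h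
    rw [h, key2 (s * e) (by rw [mul_assoc, he])]
end

section
/- The degree map ∂: S(G) → G, the unique homomorphism with ∂([s]) = s, is essentially injective (idempotent pure): if x ∈ S(G) and ∂(x) is idempotent in G, then x is idempotent in S(G). Moreover, if x = ε_A[t] is in normal form then ∂(x) = t. -/
universe u v

variable (G : Type u) [InverseSemigroup G]

variable {G}

namespace Isg
open InverseSemigroup
variable {G : Type u} [InverseSemigroup G]

theorem tailed {M : Type v} [Mul M] {p q : M} (h : p = q) (z : M) : p * z = q * z := by rw [h]

theorem sstar (a : G) : star (star a) = a :=
  (star_unique (star a) a (star_mul_self_star a) (mul_star_mul_self a)).symm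

theorem idem_star {e : G} (h : e * e = e) : star e = e :=
  (star_unique e e (by rw [h, h]) (by rw [h, h])).symm

theorem range_idem (a : G) : (a * star a) * (a * star a) = a * star a := by
  rw [← mul_assoc, mul_star_mul_self]

theorem source_idem (a : G) : (star a * a) * (star a * a) = star a * a := by
  rw [← mul_assoc, star_mul_self_star]

theorem abs1 (a z : G) : a * (star a * (a * z)) = a * z := by
  rw [← mul_assoc, ← mul_assoc, mul_star_mul_self]

theorem abs2 (a z : G) : star a * (a * (star a * z)) = star a * z := by
  rw [← mul_assoc, ← mul_assoc, star_mul_self_star]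

theorem mul_idem {e f : G} (he : e * e = e) (hf : f * f = f) :
    (e * f) * (e * f) = e * f := by
  have he' : ∀ z, e * (e * z) = e * z := fun z => by
    have := tailed he z; simpa [mul_assoc] using this
  have hf' : ∀ z, f * (f * z) = f * z := fun z => by
    have := tailed hf z; simpa [mul_assoc] using this
  set x := star (e * f) with hx
  have k1 : (e * f) * x * (e * f) = e * f := mul_star_mul_self _
  have k2 : x * (e * f) * x = x := star_mul_self_star _
  have k1' : e * (f * (x * (e * f))) = e * f := by simpa [mul_assoc] using k1
  have k2' : ∀ z, x * (e * (f * (x * z))) = x * z := fun z => by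
    have := tailed k2 z; simpa [mul_assoc] using this
  have h3 : f * (x * e) = x := by
    refine star_unique (e * f) (f * (x * e)) ?_ ?_
    · simp only [mul_assoc]
      rw [hf', he', k1']
    · simp only [mul_assoc]
      rw [he', hf', k2']
  have hxx : x * x = x := by
    conv_lhs => rw [← h3]
    simp only [mul_assoc]
    rw [k2' e, h3]
  have hef : e * f = x := by
    have h4 : star x = x := idem_star hxx
    rw [hx, sstar] at h4; rw [h4]
  rw [hef]; exact hxx

theorem comm_idem {e f : G} (he : e * e = e) (hf : f * f = f) : e * f = f * e := by
  have he' : ∀ z, e * (e * z) = e * z := fun z => by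
    have := tailed he z; simpa [mul_assoc] using this
  have hf' : ∀ z, f * (f * z) = f * z := fun z => by
    have := tailed hf z; simpa [mul_assoc] using this
  have h1 : (e * f) * (e * f) = e * f := mul_idem he hf
  have h2 : (f * e) * (f * e) = f * e := mul_idem hf he
  have h1' : e * (f * (e * f)) = e * f := by simpa [mul_assoc] using h1
  have h2' : f * (e * (f * e)) = f * e := by simpa [mul_assoc] using h2
  have key : f * e = star (e * f) := by
    refine star_unique (e * f) (f * e) ?_ ?_
    · simp only [mul_assoc]; rw [hf', he', h1']
    · simp only [mul_assoc]; rw [he', hf', h2']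
  rw [key, idem_star h1]

theorem smul (a b : G) : star (a * b) = star b * star a := by
  have hpq := comm_idem (range_idem b) (source_idem a)
  have hcm : ∀ z : G, star a * (a * (b * (star b * z))) = b * (star b * (star a * (a * z))) :=
    fun z => by have := tailed hpq.symm z; simpa [mul_assoc] using this
  refine (star_unique (a * b) (star b * star a) ?_ ?_).symm
  · have h0 : a * b * (star b * star a) * (a * b)
        = a * ((star a * a) * ((b * star b) * b)) := by
      simp only [mul_assoc]; rw [← hcm]
    rw [h0, mul_star_mul_self b, ← mul_assoc, ← mul_assoc, mul_star_mul_self]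
  · have h0 : star b * star a * (a * b) * (star b * star a)
        = star b * ((b * star b) * ((star a * a) * star a)) := by
      simp only [mul_assoc]; rw [hcm]
    rw [h0, star_mul_self_star a, ← mul_assoc, ← mul_assoc, star_mul_self_star]

theorem hc (a b z : G) :
    b * (star b * (a * (star a * z))) = a * (star a * (b * (star b * z))) := by
  have := tailed (comm_idem (range_idem b) (range_idem a)) z
  simpa [mul_assoc] using this

theorem hFE (a b : G) : b * (star b * (a * star a)) = a * (star a * (b * star b)) := by
  simpa [mul_assoc] using comm_idem (range_idem b) (range_idem a)

theorem starU (a b : G) :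
    star (a * (star a * b) * star (star a * b)) = star a * b * star b := by
  rw [smul, sstar, smul, smul, sstar]
  simp only [mul_assoc]
  rw [hFE, abs2]

theorem dA (a b : G) : a * (star a * b) = (a * star a) * b := (mul_assoc a (star a) b).symm

theorem dB (a b : G) :
    a * (star a * b) * star (star a * b) = (a * star a) * ((b * star b) * a) := by
  rw [smul, sstar]
  simp only [mul_assoc]

theorem gP (a b : G) :
    ((a * star a) * b) * (star ((a * star a) * b) * ((a * star a) * ((b * star b) * a)))
      = (a * star a) * ((b * star b) * a) := by
  rw [smul, idem_star (range_idem a)]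
  simp only [mul_assoc]
  rw [abs1 a (star a * (b * (star b * a))), hc a b (b * (star b * a)),
    abs1 a (star a * (b * (star b * (b * (star b * a))))), abs1 b (star b * a)]

theorem gQ (a b : G) :
    ((a * star a) * ((b * star b) * a))
        * star (star ((a * star a) * b) * ((a * star a) * ((b * star b) * a)))
      = (a * star a) * ((b * star b) * b) := by
  rw [smul (star ((a * star a) * b)) ((a * star a) * ((b * star b) * a)), sstar,
    smul (a * star a) ((b * star b) * a), smul (b * star b) a,
    idem_star (range_idem a), idem_star (range_idem b)]
  simp only [mul_assoc]
  rw [abs1 a (star a * b), hc a b (b * (star b * (a * (star a * b)))),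
    abs1 a (star a * (b * (star b * (b * (star b * (a * (star a * b))))))),
    abs1 b (star b * (a * (star a * b))), hc a b b,
    abs1 a (star a * (b * (star b * b)))]

theorem g3 (a b : G) :
    ((a * star a) * ((b * star b) * a)) * star ((a * star a) * ((b * star b) * a))
      = ((a * star a) * ((b * star b) * b)) * star ((a * star a) * ((b * star b) * b)) := by
  rw [smul (a * star a) ((b * star b) * a), smul (b * star b) a,
    smul (a * star a) ((b * star b) * b), smul (b * star b) b,
    idem_star (range_idem a), idem_star (range_idem b)]
  simp only [mul_assoc]
  rw [hc a b (b * (star b * (a * star a))),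
    abs1 a (star a * (b * (star b * (b * (star b * (a * star a)))))),
    abs1 b (star b * (a * star a)), hFE, abs1 a (star a * (b * star b))]
  rw [hc a b (b * star b), abs1 a (star a * (b * (star b * (b * star b)))), abs1 b (star b)]

/- SG-level lemmas -/

theorem rel_eq {w₁ w₂ : FreeSemigroup G} (h : ExpRel G w₁ w₂) :
    (w₁ : (expCon G).Quotient) = (w₂ : (expCon G).Quotient) :=
  (Con.eq _).mpr (ConGen.Rel.of _ _ h)

theorem r1 (s t : G) : gen s * gen t * gen (star t) = gen (s * t) * gen (star t) :=
  rel_eq (ExpRel.rel1 s t)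

theorem r2 (s t : G) : gen (star s) * gen s * gen t = gen (star s) * gen (s * t) :=
  rel_eq (ExpRel.rel2 s t)

theorem r3 (s : G) : gen s * gen (star s) * gen s = gen s :=
  rel_eq (ExpRel.rel3 s)

theorem gen_eps (s t : G) : gen s * eps t = eps (s * t) * gen (s * t * star t) := by
  show gen s * (gen t * gen (star t)) = gen (s * t) * gen (star (s * t)) * gen (s * t * star t)
  rw [← mul_assoc, r1]
  conv_lhs => rw [← r3 (s * t)]
  rw [mul_assoc (gen (s * t) * gen (star (s * t))) (gen (s * t)) (gen (star t)),
    mul_assoc (gen (s * t)) (gen (star (s * t))),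
    ← mul_assoc (gen (star (s * t))) (gen (s * t)) (gen (star t)), r2,
    ← mul_assoc (gen (s * t))]

theorem gen_gen (u t : G) : gen u * gen t = eps u * gen (u * t) := by
  show _ = gen u * gen (star u) * gen (u * t)
  conv_lhs => rw [← r3 u]
  rw [mul_assoc (gen u * gen (star u)) (gen u) (gen t),
    mul_assoc (gen u) (gen (star u)),
    ← mul_assoc (gen (star u)) (gen u) (gen t), r2, ← mul_assoc (gen u)]

theorem eps_idem (s : G) : eps s * eps s = eps s := by
  have := tailed (r3 s) (gen (star s))
  simpa only [eps, mul_assoc] using this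

theorem diamond (a b : G) : eps a * eps b
    = eps (a * (star a * b)) * eps (a * (star a * b) * star (star a * b)) := by
  have step1 := gen_eps (star a) b
  have step2 := gen_eps a (star a * b)
  calc eps a * eps b = gen a * (gen (star a) * eps b) :=
        mul_assoc (gen a) (gen (star a)) (eps b)
    _ = gen a * (eps (star a * b) * gen (star a * b * star b)) := by rw [step1]
    _ = gen a * eps (star a * b) * gen (star a * b * star b) :=
        (mul_assoc (gen a) (eps (star a * b)) (gen (star a * b * star b))).symm
    _ = eps (a * (star a * b)) * gen (a * (star a * b) * star (star a * b))
          * gen (star a * b * star b) := by rw [step2]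
    _ = eps (a * (star a * b)) * (gen (a * (star a * b) * star (star a * b))
          * gen (star a * b * star b)) := mul_assoc _ _ _
    _ = eps (a * (star a * b)) * eps (a * (star a * b) * star (star a * b)) := by
        rw [← starU a b]; rfl

theorem dd (a b : G) : eps a * eps b
    = eps ((a * star a) * ((b * star b) * a)) * eps ((a * star a) * ((b * star b) * b)) := by
  have h1 := diamond a b
  rw [dB a b, dA a b] at h1
  have h2 := diamond ((a * star a) * b) ((a * star a) * ((b * star b) * a))
  rw [gP a b, gQ a b] at h2
  rw [h1, h2]

theorem eps_comm_of {x y : G} (h : x * star x = y * star y) :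
    eps x * eps y = eps y * eps x := by
  have hd := diamond x y
  have e1 : x * (star x * y) = y := by
    rw [← mul_assoc, h, mul_star_mul_self]
  have e2 : x * (star x * y) * star (star x * y) = x := by
    rw [e1, smul, sstar, ← mul_assoc, ← h, mul_star_mul_self]
  rw [e2, e1] at hd
  exact hd

theorem eps_comm (a b : G) : eps a * eps b = eps b * eps a := by
  have h1 := dd a b
  have h2 := dd b a
  have hswap : ∀ z : G, (b * star b) * ((a * star a) * z) = (a * star a) * ((b * star b) * z) :=
    fun z => by rw [← mul_assoc, comm_idem (range_idem b) (range_idem a), mul_assoc]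
  rw [hswap b, hswap a] at h2
  rw [h1, eps_comm_of (g3 a b), h2]

/- epsList machinery -/

def dprod (l : List G) (t : G) : G := l.foldr (fun b p => (b * star b) * p) t

theorem epsList_nil (x : SG G) : epsList [] x = x := rfl

theorem epsList_cons (b : G) (l : List G) (x : SG G) :
    epsList (b :: l) x = eps b * epsList l x := rfl

theorem pushGen (l : List G) : ∀ a t : G,
    ∃ l', gen a * epsList l (gen t) = epsList l' (gen (a * dprod l t)) := by
  induction l with
  | nil =>
    intro a t
    exact ⟨[a], by rw [epsList_nil, epsList_cons, epsList_nil]; exact gen_gen a t⟩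
  | cons b l ih =>
    intro a t
    obtain ⟨l', h⟩ := ih (a * b * star b) t
    refine ⟨(a * b) :: l', ?_⟩
    rw [epsList_cons, epsList_cons]
    calc gen a * (eps b * epsList l (gen t))
        = gen a * eps b * epsList l (gen t) := (mul_assoc _ _ _).symm
      _ = eps (a * b) * gen (a * b * star b) * epsList l (gen t) := by rw [gen_eps]
      _ = eps (a * b) * (gen (a * b * star b) * epsList l (gen t)) := mul_assoc _ _ _
      _ = eps (a * b) * epsList l' (gen (a * b * star b * dprod l t)) := by rw [h]
      _ = eps (a * b) * epsList l' (gen (a * dprod (b :: l) t)) := by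
          rw [show a * b * star b * dprod l t = a * dprod (b :: l) t from by
            show _ = a * ((b * star b) * dprod l t)
            simp only [mul_assoc]]

theorem d_epsList (d : SG G →ₙ* G) (hd : ∀ s : G, d (gen s) = s) (l : List G) (t : G) :
    d (epsList l (gen t)) = dprod l t := by
  induction l with
  | nil => exact hd t
  | cons b l ih =>
    rw [epsList_cons, map_mul, ih]
    show d (gen b * gen (star b)) * _ = (b * star b) * dprod l t
    rw [map_mul, hd, hd]

def cls (w : FreeSemigroup G) : SG G := (w : (expCon G).Quotient)

theorem exists_rep (d : SG G →ₙ* G) (hd : ∀ s : G, d (gen s) = s) (x : SG G) :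
    ∃ l, x = epsList l (gen (d x)) := by
  induction x using Con.induction_on with
  | H w =>
    induction w using FreeSemigroup.recOnMul with
    | ih1 s =>
      refine ⟨[], ?_⟩
      show gen s = epsList [] (gen (d (gen s)))
      rw [epsList_nil, hd]
    | ih2 s y _ ihy =>
      obtain ⟨l, hl⟩ := ihy
      have hl' : cls y = epsList l (gen (d (cls y))) := hl
      set t := d (cls y) with htd
      have ht : dprod l t = t := ((congrArg d hl').trans (d_epsList d hd l t)).symm
      obtain ⟨l', h⟩ := pushGen l s t
      have hco : cls (FreeSemigroup.of s * y) = gen s * cls y := rfl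
      have hdv : d (cls (FreeSemigroup.of s * y)) = s * t := by
        rw [hco, map_mul, hd]
      refine ⟨l', ?_⟩
      show cls (FreeSemigroup.of s * y)
          = epsList l' (gen (d (cls (FreeSemigroup.of s * y))))
      rw [hdv, hco, hl', h, ht]

theorem epsList_comm (c : G) (l : List G) (t : G) :
    eps c * epsList l (eps t) = epsList l (eps t) * eps c := by
  induction l with
  | nil => exact eps_comm c t
  | cons b l ih =>
    rw [epsList_cons, ← mul_assoc, eps_comm c b, mul_assoc, ih, ← mul_assoc]

theorem epsList_idem (l : List G) (t : G) :
    epsList l (eps t) * epsList l (eps t) = epsList l (eps t) := by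
  induction l with
  | nil => exact eps_idem t
  | cons b l ih =>
    rw [epsList_cons]
    have h0 : (eps b * epsList l (eps t)) * (eps b * epsList l (eps t))
        = eps b * ((epsList l (eps t) * eps b) * epsList l (eps t)) := by
      simp only [mul_assoc]
    rw [h0, ← epsList_comm b l t]
    rw [show eps b * ((eps b * epsList l (eps t)) * epsList l (eps t))
        = (eps b * eps b) * (epsList l (eps t) * epsList l (eps t)) from by
      simp only [mul_assoc]]
    rw [eps_idem, ih]

theorem d_normal (d : SG G →ₙ* G) (hd : ∀ s : G, d (gen s) = s) (t : G) :
    ∀ l : List G, (∀ a ∈ l, a * star a = t * star t) → d (epsList l (gen t)) = t := by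
  intro l
  induction l with
  | nil => intro _; exact hd t
  | cons b l ih =>
    intro hall
    rw [epsList_cons, map_mul, ih (fun a ha => hall a (List.mem_cons_of_mem b ha))]
    show d (gen b * gen (star b)) * t = t
    rw [map_mul, hd, hd, hall b List.mem_cons_self, mul_star_mul_self]

end Isg


theorem degree_map_idempotent_pure (G : Type u) [InverseSemigroup G]
    (d : SG G →ₙ* G) (hd : ∀ s : G, d (gen s) = s) :
    (∀ x : SG G, d x * d x = d x → x * x = x) ∧
    (∀ (A : Finset G) (t : G), IsNormalForm A t → d (epsSet A (gen t)) = t) := by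
  constructor
  · intro x hx
    obtain ⟨l, hl⟩ := Isg.exists_rep d hd x
    set t := d x with htd
    have hst : star t = t := Isg.idem_star hx
    have h3 : gen t * gen t * gen t = gen t := by
      have := Isg.r3 t; rwa [hst] at this
    have h2 : gen t * gen t = gen t := by
      have h1 := Isg.r1 t t
      rw [hst, hx] at h1
      exact h1.symm.trans h3
    have hge : gen t = eps t := by
      rw [eps, hst]; exact h2.symm
    rw [hl, hge]
    exact Isg.epsList_idem l t
  · rintro A t ⟨-, -, hall⟩
    exact Isg.d_normal d hd t A.toList
      (fun a ha => hall a (Finset.mem_toList.mp ha))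
end
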